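/- arXiv:2102.02306 — 9 statements merged into one kernel-verified Lean document; each statement's English description precedes it below -/
import Mathlib

section
/- Let X be a nonempty set and let μ be a finitely supported probability measure on X, i.e. μ = Σ_{k=1}^m λ_k δ_{y_k} where y_1,…,y_m are distinct points of X, λ_k > 0 and Σ_{k=1}^m λ_k = 1. Set C = (m−1)·⌊m/2⌋. Then there exists a sequence (y_n)_{n≥1} of points of X such that for every N ≥ 1 and every bounded function f : X → ℝ one has |(1/N)·Σ_{k=1}^N f(y_k) − ∫_X f dμ| ≤ (2‖f‖_∞/N)·(1 + C), where ‖f‖_∞ = sup_{x∈X}|f(x)|. -/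
open Filter Finset

/-- For a finitely supported probability measure
`μ = ∑ λ_k δ_{y k}` on a nonempty set `X` (the `y k` distinct, `λ_k > 0`,
`∑ λ_k = 1`), with `C = (m-1)·⌊m/2⌋`, there is a sequence `(y_n)` in `X`
such that for every `N ≥ 1` and every bounded `f : X → ℝ` (with bound `M`),
`|(1/N)·∑_{k<N} f(y_k) - ∫ f dμ| ≤ (2M/N)·(1+C)`. -/
theorem stmt0 {X : Type*} [Nonempty X] (m : ℕ) (hm : 1 ≤ m)
    (y : Fin m → X) (hy : Function.Injective y)
    (lam : Fin m → ℝ) (hpos : ∀ k, 0 < lam k) (hsum : ∑ k, lam k = 1) :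
    ∃ seq : ℕ → X,
      ∀ N : ℕ, 1 ≤ N → ∀ (f : X → ℝ) (M : ℝ), (∀ x, |f x| ≤ M) →
        |(N : ℝ)⁻¹ * ∑ k ∈ Finset.range N, f (seq k) - ∑ k, lam k * f (y k)|
          ≤ 2 * M / N * (1 + (((m - 1) * (m / 2) : ℕ) : ℝ)) := by
  classical
  have hmne : Nonempty (Fin m) := ⟨⟨0, hm⟩⟩
  -- the key numeric fact: m ≤ 1 + (m-1)*(m/2)
  have hnum : (m : ℝ) ≤ 1 + (((m - 1) * (m / 2) : ℕ) : ℝ) := by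
    have : m ≤ 1 + (m - 1) * (m / 2) := by
      rcases Nat.lt_or_ge m 4 with h4 | h4
      · interval_cases m <;> decide
      · have hb : 2 ≤ m / 2 := by omega
        calc m ≤ 1 + (m - 1) * 2 := by omega
          _ ≤ 1 + (m - 1) * (m / 2) := by
              exact Nat.add_le_add_left (Nat.mul_le_mul_left _ hb) 1
    calc (m : ℝ) ≤ ((1 + (m - 1) * (m / 2) : ℕ) : ℝ) := by exact_mod_cast this
      _ = 1 + (((m - 1) * (m / 2) : ℕ) : ℝ) := by push_cast; ring
  -- existence of a pickable index
  have key : ∀ (N : ℕ) (c : Fin m → ℕ), (∑ k, c k) = N →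
      ∃ k, (c k : ℝ) ≤ N * lam k := by
    intro N c hc
    by_contra h
    push_neg at h
    have h1 : (N : ℝ) < (N : ℝ) := by
      calc (N : ℝ) = ∑ k, (N : ℝ) * lam k := by rw [← Finset.mul_sum, hsum, mul_one]
        _ < ∑ k, (c k : ℝ) :=
            Finset.sum_lt_sum_of_nonempty Finset.univ_nonempty (fun k _ => h k)
        _ = (N : ℝ) := by rw [← Nat.cast_sum, hc]
    exact lt_irrefl _ h1
  let pick : ℕ → (Fin m → ℕ) → Fin m := fun N c =>
    if h : ∃ k, (c k : ℝ) ≤ N * lam k then h.choose else Classical.arbitrary (Fin m)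
  let c : ℕ → Fin m → ℕ := fun N =>
    Nat.rec (fun _ => 0) (fun n cn k => cn k + if k = pick n cn then 1 else 0) N
  have hcs : ∀ n, c (n + 1) = fun k => c n k + if k = pick n (c n) then 1 else 0 :=
    fun n => rfl
  have hsumc : ∀ N, (∑ k, c N k) = N := by
    intro N
    induction N with
    | zero => simp [c]
    | succ n ih =>
      rw [hcs n, Finset.sum_add_distrib, ih]
      simp [Finset.sum_ite_eq']
  have hpickle : ∀ n, (Nat.cast (c n (pick n (c n))) : ℝ) ≤ n * lam (pick n (c n)) := by
    intro n
    have hex := key n (c n) (hsumc n)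
    have hp : pick n (c n) = hex.choose := by simp only [pick, dif_pos hex]
    rw [hp]
    exact hex.choose_spec
  -- the upper bound on counts
  have hub : ∀ N k, (Nat.cast (c N k) : ℝ) ≤ N * lam k + 1 := by
    intro N
    induction N with
    | zero => intro k; simp [c]
    | succ n ih =>
      intro k
      have hlk : 0 ≤ lam k := (hpos k).le
      rw [hcs n]
      by_cases hk : k = pick n (c n)
      · subst hk
        push_cast [if_pos rfl]
        have := hpickle n
        push_cast
        nlinarith
      · push_cast [if_neg hk]
        have := ih k
        push_cast at this ⊢
        nlinarith
  refine ⟨fun n => y (pick n (c n)), ?_⟩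
  intro N hN f M hf
  have hseq : ∀ (n : ℕ), ∑ j ∈ Finset.range n, f (y (pick j (c j)))
      = ∑ k, (Nat.cast (c n k) : ℝ) * f (y k) := by
    intro n
    induction n with
    | zero => simp [c]
    | succ n ih =>
      rw [Finset.sum_range_succ, ih, hcs n]
      have hterm : ∀ k : Fin m,
          (Nat.cast (c n k + if k = pick n (c n) then 1 else 0) : ℝ) * f (y k)
          = (Nat.cast (c n k) : ℝ) * f (y k)
            + (if k = pick n (c n) then f (y k) else 0) := by
        intro k
        by_cases hk : k = pick n (c n) <;> simp [hk] <;> push_cast <;> ring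
      rw [Finset.sum_congr rfl fun k _ => hterm k, Finset.sum_add_distrib]
      simp [Finset.sum_ite_eq']
  have hM : 0 ≤ M := le_trans (abs_nonneg _) (hf (Classical.arbitrary X))
  have hN0 : (0 : ℝ) < N := by exact_mod_cast hN
  set x : Fin m → ℝ := fun k => (Nat.cast (c N k) : ℝ) - N * lam k with hx
  have hx1 : ∀ k, x k ≤ 1 := fun k => by
    have := hub N k; simp only [hx]; linarith
  have hxs : ∑ k, x k = 0 := by
    simp only [hx]
    rw [Finset.sum_sub_distrib, ← Finset.mul_sum, hsum, ← Nat.cast_sum, hsumc N]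
    ring
  have habs : ∑ k, |x k| ≤ 2 * m := by
    calc ∑ k, |x k| ≤ ∑ k, (2 - x k) := by
          refine Finset.sum_le_sum fun k _ => ?_
          rcases abs_cases (x k) with ⟨h1, h2⟩ | ⟨h1, h2⟩ <;>
            [linarith [hx1 k]; linarith]
      _ = 2 * m - ∑ k, x k := by
          rw [Finset.sum_sub_distrib, Finset.sum_const, Finset.card_univ,
            Fintype.card_fin, nsmul_eq_mul, mul_comm]
      _ = 2 * m := by rw [hxs]; ring
  have hrw : (N : ℝ)⁻¹ * ∑ j ∈ Finset.range N, f (y (pick j (c j)))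
      - ∑ k, lam k * f (y k) = (N : ℝ)⁻¹ * ∑ k, x k * f (y k) := by
    rw [hseq N]
    have h2 : ∑ k, x k * f (y k)
        = ∑ k, (Nat.cast (c N k) : ℝ) * f (y k) - (N : ℝ) * ∑ k, lam k * f (y k) := by
      rw [Finset.mul_sum, ← Finset.sum_sub_distrib]
      exact Finset.sum_congr rfl fun k _ => by simp only [hx]; ring
    rw [h2, mul_sub, inv_mul_cancel_left₀ (ne_of_gt hN0)]
  rw [hrw, abs_mul, abs_inv, abs_of_pos hN0]
  have hbound : |∑ k, x k * f (y k)| ≤ 2 * m * M := by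
    calc |∑ k, x k * f (y k)| ≤ ∑ k, |x k * f (y k)| := Finset.abs_sum_le_sum_abs _ _
      _ ≤ ∑ k, |x k| * M := by
          refine Finset.sum_le_sum fun k _ => ?_
          rw [abs_mul]
          exact mul_le_mul_of_nonneg_left (hf _) (abs_nonneg _)
      _ = (∑ k, |x k|) * M := by rw [Finset.sum_mul]
      _ ≤ 2 * m * M := mul_le_mul_of_nonneg_right habs hM
  calc (N : ℝ)⁻¹ * |∑ k, x k * f (y k)| ≤ (N : ℝ)⁻¹ * (2 * m * M) :=
        mul_le_mul_of_nonneg_left hbound (by positivity)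
    _ = 2 * M / N * m := by field_simp
    _ ≤ 2 * M / N * (1 + (((m - 1) * (m / 2) : ℕ) : ℝ)) := by
        refine mul_le_mul_of_nonneg_left hnum (by positivity)
end

section
/- Let X be a nonempty set, let L be a subset of the closed unit ball of ℓ∞(X), and let (μ_j)_{j≥1} be a sequence of finitely supported probability measures on X. Assume there is a function μ : L → ℝ such that μ_j(f) → μ(f) as j → ∞ for every f ∈ L (where μ_j(f) = ∫_X f dμ_j). Then there exists a sequence (x_n)_{n≥1} of points of ⋃_{j=1}^∞ supp μ_j such that for every f ∈ L, (1/N)·Σ_{k=1}^N f(x_k) → μ(f) as N → ∞. -/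
/-!
Round `μ_j` to a measure with rational weights, within `1/(j+1)` uniformly over the unit ball,
and let `y_j` run periodically through its atoms with the right multiplicities. Partial sums
of `f ∘ y_j` then track `m · μ f` up to `m (1/(j+1) + |μ_j f - μ f|)` plus one period. Laying the
`y_j` end to end in blocks so long that everything before the previous block is negligible
makes the Cesàro averages converge to `μ f`; the construction never looks at `f`, which is why
`L` may be uncountable.
-/

open Filter Finset Function

section Rounding

variable {X : Type*} {s : Finset X} {w f : X → ℝ}

lemma abs_sum_mul_le_sum (hw0 : ∀ x ∈ s, 0 ≤ w x) (hf : ∀ x ∈ s, |f x| ≤ 1) :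
    |∑ x ∈ s, w x * f x| ≤ ∑ x ∈ s, w x := by
  refine (abs_sum_le_sum_abs _ _).trans (sum_le_sum fun x hx => ?_)
  rw [abs_mul, abs_of_nonneg (hw0 x hx)]
  exact mul_le_of_le_one_right (hw0 x hx) (hf x hx)

lemma abs_sum_natCeil_mul_sub_le (hw0 : ∀ x ∈ s, 0 ≤ w x) (hw1 : ∑ x ∈ s, w x = 1)
    (hf : ∀ x ∈ s, |f x| ≤ 1) (n : ℕ) :
    |∑ x ∈ s, (⌈n * w x⌉₊ : ℝ) * f x - (∑ x ∈ s, ⌈n * w x⌉₊ : ℕ) * ∑ x ∈ s, w x * f x|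
      ≤ 2 * s.card := by
  set e : X → ℝ := fun x => ⌈n * w x⌉₊ - n * w x
  have he0 : ∀ x ∈ s, 0 ≤ e x := fun x _ => sub_nonneg.mpr (Nat.le_ceil _)
  have he1 : ∀ x ∈ s, e x ≤ 1 := fun x hx =>
    sub_le_iff_le_add'.mpr (Nat.ceil_lt_add_one (by have := hw0 x hx; positivity)).le
  have hrewrite : ∑ x ∈ s, (⌈n * w x⌉₊ : ℝ) * f x
      - (∑ x ∈ s, ⌈n * w x⌉₊ : ℕ) * ∑ x ∈ s, w x * f x
      = ∑ x ∈ s, e x * f x - (∑ x ∈ s, e x) * ∑ x ∈ s, w x * f x := by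
    simp only [e, Nat.cast_sum, sub_mul, sum_sub_distrib, ← mul_sum, hw1, mul_assoc]
    ring
  have hsum_e : ∑ x ∈ s, e x ≤ s.card := by
    simpa using sum_le_sum he1
  have hfirst : |∑ x ∈ s, e x * f x| ≤ ∑ x ∈ s, e x := abs_sum_mul_le_sum he0 hf
  have hsecond : |(∑ x ∈ s, e x) * ∑ x ∈ s, w x * f x| ≤ ∑ x ∈ s, e x := by
    rw [abs_mul, abs_of_nonneg (sum_nonneg he0)]
    exact mul_le_of_le_one_right (sum_nonneg he0) ((abs_sum_mul_le_sum hw0 hf).trans_eq hw1)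
  rw [hrewrite]
  linarith [abs_sub (∑ x ∈ s, e x * f x) ((∑ x ∈ s, e x) * ∑ x ∈ s, w x * f x)]

lemma exists_periodic_of_counts (s : Finset X) (c : X → ℕ) (hc : 0 < ∑ x ∈ s, c x) :
    ∃ y : ℕ → X, Periodic y (∑ x ∈ s, c x) ∧ (∀ i, y i ∈ s) ∧
      ∀ g : X → ℝ, ∑ i ∈ range (∑ x ∈ s, c x), g (y i) = ∑ x ∈ s, c x * g x := by
  set p := ∑ x ∈ s, c x
  have hcard : Fintype.card (Σ x : s, Fin (c x)) = p := by
    simp [p, sum_attach s c]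
  let e := Fintype.equivFinOfCardEq hcard
  refine ⟨fun i => (e.symm ⟨i % p, Nat.mod_lt _ hc⟩).1, fun i => by simp, fun i => (e.symm _).1.2,
    fun g => ?_⟩
  rw [← Fin.sum_univ_eq_sum_range (fun i => g (e.symm ⟨i % p, Nat.mod_lt _ hc⟩).1)]
  have hmod (k : Fin p) : (⟨k % p, Nat.mod_lt _ hc⟩ : Fin p) = k := Fin.ext (Nat.mod_eq_of_lt k.2)
  simp only [hmod]
  rw [e.symm.sum_comp (fun σ => g σ.1), Fintype.sum_sigma]
  simp only [sum_const, card_univ, Fintype.card_fin, nsmul_eq_mul]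
  exact sum_attach s fun x => (c x : ℝ) * g x

lemma exists_periodic_approx (hw0 : ∀ x ∈ s, 0 ≤ w x) (hw1 : ∑ x ∈ s, w x = 1) {ε : ℝ}
    (hε : 0 < ε) : ∃ p > 0, ∃ y : ℕ → X, Periodic y p ∧ (∀ i, y i ∈ s) ∧
      ∀ f : X → ℝ, (∀ x ∈ s, |f x| ≤ 1) →
        |∑ i ∈ range p, f (y i) - p * ∑ x ∈ s, w x * f x| ≤ p * ε := by
  obtain ⟨n, hn⟩ := exists_nat_gt (2 * s.card / ε)
  have hnp : (n : ℝ) ≤ ∑ x ∈ s, ⌈n * w x⌉₊ := by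
    calc (n : ℝ) = ∑ x ∈ s, n * w x := by rw [← mul_sum, hw1, mul_one]
      _ ≤ _ := by push_cast; exact sum_le_sum fun x _ => Nat.le_ceil _
  have hp : 0 < ∑ x ∈ s, ⌈n * w x⌉₊ := by
    have : (0 : ℝ) < n := (by positivity : (0 : ℝ) ≤ 2 * s.card / ε).trans_lt hn
    exact_mod_cast this.trans_le hnp
  obtain ⟨y, hy_per, hy_mem, hy_sum⟩ := exists_periodic_of_counts s (fun x => ⌈n * w x⌉₊) hp
  refine ⟨_, hp, y, hy_per, hy_mem, fun f hf => ?_⟩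
  rw [hy_sum]
  calc _ ≤ 2 * (s.card : ℝ) := abs_sum_natCeil_mul_sub_le hw0 hw1 hf n
    _ ≤ n * ε := (div_lt_iff₀ hε).mp hn |>.le
    _ ≤ _ := by gcongr

end Rounding

lemma abs_sub_mul_le_of_abs_sub_mul_le {A b b' ε p : ℝ} (hp : 0 ≤ p)
    (h : |A - p * b'| ≤ p * ε) : |A - p * b| ≤ p * (ε + |b' - b|) :=
  calc |A - p * b| = |(A - p * b') + p * (b' - b)| := by ring_nf
    _ ≤ |A - p * b'| + p * |b' - b| :=
      (abs_add_le _ _).trans_eq (by rw [abs_mul, abs_of_nonneg hp])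
    _ ≤ p * (ε + |b' - b|) := by linarith

lemma abs_sum_range_sub_le_of_periodic {g : ℕ → ℝ} {p : ℕ} {b K ε : ℝ} (hg : Periodic g p)
    (hp : 0 < p) (hK : ∀ i, |g i - b| ≤ K) (hε : 0 ≤ ε)
    (hperiod : |∑ i ∈ range p, g i - p * b| ≤ p * ε) (m : ℕ) :
    |∑ i ∈ range m, (g i - b)| ≤ m * ε + p * K := by
  induction m using Nat.strong_induction_on with
  | _ m ih =>
    rcases lt_or_ge m p with hm | hm
    · have hK0 : 0 ≤ K := (abs_nonneg _).trans (hK 0)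
      calc |∑ i ∈ range m, (g i - b)| ≤ ∑ i ∈ range m, K :=
            (abs_sum_le_sum_abs _ _).trans (sum_le_sum fun i _ => hK i)
        _ ≤ m * ε + p * K := by
          rw [sum_const, card_range, nsmul_eq_mul]
          have : (m : ℝ) ≤ p := by exact_mod_cast hm.le
          nlinarith [mul_nonneg (Nat.cast_nonneg m) hε]
    · obtain ⟨m', rfl⟩ := Nat.exists_eq_add_of_le hm
      have hshift : ∑ i ∈ range m', (g (p + i) - b) = ∑ i ∈ range m', (g i - b) := by
        simp only [add_comm p, hg _]
      have hfirst : ∑ i ∈ range p, (g i - b) = ∑ i ∈ range p, g i - p * b := by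
        rw [sum_sub_distrib, sum_const, card_range, nsmul_eq_mul]
      rw [sum_range_add, hshift, hfirst]
      have := ih m' (by omega)
      push_cast
      linarith [abs_add_le (∑ i ∈ range p, g i - p * b) (∑ i ∈ range m', (g i - b))]

section Blocks

variable {X : Type*}

def blockIndex (T : ℕ → ℕ) (N : ℕ) : ℕ := Nat.findGreatest (fun j => T j ≤ N) N

variable {T : ℕ → ℕ}

lemma blockIndex_spec (hT : StrictMono T) (hT0 : T 0 = 0) (N : ℕ) :
    T (blockIndex T N) ≤ N ∧ N < T (blockIndex T N + 1) := by
  have hle : T (blockIndex T N) ≤ N :=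
    Nat.findGreatest_spec (P := fun j => T j ≤ N) (Nat.zero_le N) (by simp [hT0])
  refine ⟨hle, lt_of_not_ge fun h => ?_⟩
  exact (Nat.lt_succ_self _).not_ge
    (Nat.le_findGreatest (P := fun j => T j ≤ N) (hT.le_apply.trans h) h)

lemma blockIndex_eq (hT : StrictMono T) (hT0 : T 0 = 0) {j N : ℕ} (h₁ : T j ≤ N)
    (h₂ : N < T (j + 1)) : blockIndex T N = j := by
  obtain ⟨hle, hlt⟩ := blockIndex_spec hT hT0 N
  have := hT.lt_iff_lt.mp (hle.trans_lt h₂)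
  have := hT.lt_iff_lt.mp (h₁.trans_lt hlt)
  omega

def concatBlocks (T : ℕ → ℕ) (y : ℕ → ℕ → X) (N : ℕ) : X :=
  y (blockIndex T N) (N - T (blockIndex T N))

lemma concatBlocks_add (hT : StrictMono T) (hT0 : T 0 = 0) (y : ℕ → ℕ → X) {j i : ℕ}
    (hi : T j + i < T (j + 1)) : concatBlocks T y (T j + i) = y j i := by
  rw [concatBlocks, blockIndex_eq hT hT0 (Nat.le_add_right _ _) hi, Nat.add_sub_cancel_left]

/-- The factor `2` bounds `|f x - μ f|`: with it, the terms before block `j` and the boundary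
errors `c j`, `c (j + 1)` weigh at most `1 / (j + 1)` in any average ending after block `j`. -/
def blockStart (c : ℕ → ℕ) : ℕ → ℕ
  | 0 => 0
  | j + 1 => (j + 1) * (2 * blockStart c j + c j + c (j + 1) + 1)

lemma blockStart_strictMono (c : ℕ → ℕ) : StrictMono (blockStart c) :=
  strictMono_nat_of_lt_succ fun j => by
    simp only [blockStart]
    nlinarith

lemma blockStart_growth (c : ℕ → ℕ) (j : ℕ) :
    (j + 1) * (2 * blockStart c j + c j + c (j + 1)) ≤ blockStart c (j + 1) :=
  Nat.mul_le_mul_left _ (Nat.le_succ _)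

end Blocks

section Cesaro

variable {a : ℕ → ℝ} {b K : ℝ} {T : ℕ → ℕ} {C δ : ℕ → ℝ}

lemma abs_sum_range_sub_le_of_blocks (hT : Monotone T) (hK : ∀ k, |a k - b| ≤ K)
    (hblock : ∀ j m, T j + m ≤ T (j + 1) → |∑ i ∈ range m, (a (T j + i) - b)| ≤ C j + m * δ j)
    (hgrowth : ∀ j : ℕ, (j + 1) * (K * T j + C j + C (j + 1)) ≤ T (j + 1))
    (hδ : ∀ j, 0 ≤ δ j) {j N : ℕ} (h₁ : T (j + 1) ≤ N) (h₂ : N ≤ T (j + 2)) :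
    |∑ k ∈ range N, (a k - b)| ≤ N * (1 / (j + 1) + δ j + δ (j + 1)) := by
  obtain ⟨m, rfl⟩ := Nat.exists_eq_add_of_le h₁
  obtain ⟨l, hl⟩ := Nat.exists_eq_add_of_le (hT (Nat.le_add_right j 1))
  have hprefix : |∑ k ∈ range (T j), (a k - b)| ≤ T j * K := by
    refine (abs_sum_le_sum_abs _ _).trans ((sum_le_sum fun k _ => hK k).trans_eq ?_)
    simp
  have hfull := hblock j l hl.ge
  have hpart := hblock (j + 1) m h₂
  have hsplit : ∑ k ∈ range (T (j + 1) + m), (a k - b) = ∑ k ∈ range (T j), (a k - b) +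
      ∑ i ∈ range l, (a (T j + i) - b) + ∑ i ∈ range m, (a (T (j + 1) + i) - b) := by
    rw [sum_range_add, hl, sum_range_add]
  have hG : T j * K + C j + C (j + 1) ≤ T (j + 1) * (1 / (j + 1)) := by
    rw [mul_one_div, le_div_iff₀ (by positivity)]
    linarith [hgrowth j]
  have hlδ : l * δ j ≤ (T (j + 1) + m : ℕ) * δ j := by
    gcongr
    · exact hδ j
    · omega
  have hmδ : m * δ (j + 1) ≤ (T (j + 1) + m : ℕ) * δ (j + 1) := by
    gcongr
    · exact hδ _
    · omega
  rw [hsplit]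
  calc _ ≤ |∑ k ∈ range (T j), (a k - b)| + |∑ i ∈ range l, (a (T j + i) - b)| +
        |∑ i ∈ range m, (a (T (j + 1) + i) - b)| := abs_add_three _ _ _
    _ ≤ T j * K + (C j + l * δ j) + (C (j + 1) + m * δ (j + 1)) := by gcongr
    _ ≤ _ := by
      have : (0 : ℝ) ≤ m * (1 / (j + 1)) := by positivity
      push_cast at hlδ hmδ ⊢
      nlinarith

lemma tendsto_average_of_blocks (hT : StrictMono T) (hT0 : T 0 = 0) (hK : ∀ k, |a k - b| ≤ K)
    (hblock : ∀ j m, T j + m ≤ T (j + 1) → |∑ i ∈ range m, (a (T j + i) - b)| ≤ C j + m * δ j)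
    (hgrowth : ∀ j : ℕ, (j + 1) * (K * T j + C j + C (j + 1)) ≤ T (j + 1))
    (hδ : ∀ j, 0 ≤ δ j) (hδ_lim : Tendsto δ atTop (nhds 0)) :
    Tendsto (fun N : ℕ => (N : ℝ)⁻¹ * ∑ k ∈ range N, a k) atTop (nhds b) := by
  have hbound : Tendsto (fun j : ℕ => 1 / ((j : ℝ) + 1) + δ j + δ (j + 1)) atTop (nhds 0) := by
    simpa using (tendsto_one_div_add_atTop_nhds_zero_nat.add hδ_lim).add
      (hδ_lim.comp (tendsto_add_atTop_nat 1))
  rw [Metric.tendsto_atTop]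
  intro ε hε
  obtain ⟨j₀, hj₀⟩ := eventually_atTop.mp (hbound.eventually (gt_mem_nhds hε))
  refine ⟨T (j₀ + 1), fun N hN => ?_⟩
  obtain ⟨hle, hlt⟩ := blockIndex_spec hT hT0 N
  have hj₀N : j₀ + 1 < blockIndex T N + 1 := hT.lt_iff_lt.mp (hN.trans_lt hlt)
  obtain ⟨j, hj, hjN⟩ : ∃ j, j₀ ≤ j ∧ blockIndex T N = j + 1 :=
    ⟨blockIndex T N - 1, by omega, by omega⟩
  rw [hjN] at hle hlt
  have hN0 : (0 : ℝ) < N := by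
    have := hT (Nat.succ_pos j)
    exact_mod_cast (hT0 ▸ this).trans_le hle
  have hmean : (N : ℝ)⁻¹ * ∑ k ∈ range N, a k - b = (N : ℝ)⁻¹ * ∑ k ∈ range N, (a k - b) := by
    rw [sum_sub_distrib, sum_const, card_range, nsmul_eq_mul]
    field_simp
  rw [Real.dist_eq, hmean, abs_mul, abs_inv, Nat.abs_cast, inv_mul_lt_iff₀ hN0]
  calc _ ≤ N * (1 / (j + 1) + δ j + δ (j + 1)) :=
        abs_sum_range_sub_le_of_blocks hT.monotone hK hblock hgrowth hδ hle hlt.le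
    _ < N * ε := by gcongr; exact hj₀ j hj

end Cesaro

theorem stmt1_general {X : Type*} (L : Set (X → ℝ))
    (hL : ∀ f ∈ L, ∀ x, |f x| ≤ 1)
    (s : ℕ → Finset X) (w : ℕ → X → ℝ)
    (hw : ∀ j, ∀ x ∈ s j, 0 < w j x)
    (hwsum : ∀ j, ∑ x ∈ s j, w j x = 1)
    (μ : (X → ℝ) → ℝ)
    (hconv : ∀ f ∈ L,
      Tendsto (fun j => ∑ x ∈ s j, w j x * f x) atTop (nhds (μ f))) :
    ∃ seq : ℕ → X, (∀ n, ∃ j, seq n ∈ s j) ∧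
      ∀ f ∈ L,
        Tendsto (fun N : ℕ => (N : ℝ)⁻¹ * ∑ k ∈ Finset.range N, f (seq k))
          atTop (nhds (μ f)) := by
  have hw0 j : ∀ x ∈ s j, 0 ≤ w j x := fun x hx => (hw j x hx).le
  choose p hp y hy_per hy_mem hy_approx using fun j =>
    exists_periodic_approx (hw0 j) (hwsum j) (Nat.one_div_pos_of_nat (α := ℝ) (n := j))
  set T := blockStart fun j => 2 * p j
  have hT : StrictMono T := blockStart_strictMono _
  refine ⟨concatBlocks T y, fun n => ⟨_, hy_mem _ _⟩, fun f hf => ?_⟩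
  have hf₁ : ∀ x, |f x| ≤ 1 := hL f hf
  have hμf : |μ f| ≤ 1 := le_of_tendsto' (hconv f hf).abs fun j =>
    (abs_sum_mul_le_sum (hw0 j) fun x _ => hf₁ x).trans_eq (hwsum j)
  set η := fun j => |∑ x ∈ s j, w j x * f x - μ f|
  refine tendsto_average_of_blocks (K := 2) (C := fun j => (2 * p j : ℕ))
    (δ := fun j => 1 / ((j : ℝ) + 1) + η j) hT rfl (fun k => ?_) (fun j m hm => ?_)
    (fun j => by exact_mod_cast blockStart_growth _ j) (fun j => by positivity) ?_
  · linarith [abs_sub (f (concatBlocks T y k)) (μ f), hf₁ (concatBlocks T y k)]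
  · have hperiod := abs_sub_mul_le_of_abs_sub_mul_le (Nat.cast_nonneg _)
      (hy_approx j f fun x _ => hf₁ x) (b := μ f)
    have hblock := abs_sum_range_sub_le_of_periodic ((hy_per j).comp f) (hp j)
      (fun i => (abs_sub _ _).trans (add_le_add (hf₁ (y j i)) hμf)) (by positivity) hperiod m
    rw [sum_congr rfl fun i hi => by
      rw [concatBlocks_add hT rfl y (by have := mem_range.mp hi; omega)]]
    simp only [comp_apply] at hblock
    push_cast
    linarith
  · simpa using tendsto_one_div_add_atTop_nhds_zero_nat.add ((hconv f hf).sub_const (μ f)).abs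

/-- Let `L` be a subset of the closed unit ball of `ℓ∞(X)` and
`(μ_j)` a sequence of finitely supported probability measures on `X` (given by
finite supports `s j` and weights `w j`), converging pointwise on `L` to a
function `μ`.  Then there is a sequence `(x_n)` of points of `⋃_j supp μ_j`
whose averages `(1/N)·∑_{k<N} f (x_k)` converge to `μ f` for every `f ∈ L`. -/
theorem stmt1 {X : Type*} [Nonempty X] (L : Set (X → ℝ))
    (hL : ∀ f ∈ L, ∀ x, |f x| ≤ 1)
    (s : ℕ → Finset X) (w : ℕ → X → ℝ)
    (hw : ∀ j, ∀ x ∈ s j, 0 < w j x)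
    (hwsum : ∀ j, ∑ x ∈ s j, w j x = 1)
    (μ : (X → ℝ) → ℝ)
    (hconv : ∀ f ∈ L,
      Tendsto (fun j => ∑ x ∈ s j, w j x * f x) atTop (nhds (μ f))) :
    ∃ seq : ℕ → X, (∀ n, ∃ j, seq n ∈ s j) ∧
      ∀ f ∈ L,
        Tendsto (fun N : ℕ => (N : ℝ)⁻¹ * ∑ k ∈ Finset.range N, f (seq k))
          atTop (nhds (μ f)) :=
  stmt1_general L hL s w hw hwsum μ hconv
end

section
/- Let X be a nonempty set, let L be a subset of the closed unit ball of ℓ∞(X), and let (μ_j)_{j≥1} be a sequence of finitely supported probability measures on X. Assume there is a function μ : L → ℝ such that μ_j(f) → μ(f) as j → ∞ uniformly in f ∈ L (where μ_j(f) = ∫_X f dμ_j). Then there exists a sequence (x_n)_{n≥1} of points of ⋃_{j=1}^∞ supp μ_j such that sup_{f∈L} |(1/N)·Σ_{k=1}^N f(x_k) − μ(f)| → 0 as N → ∞. -/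
/-!
For each accuracy `1 / (i + 1)` pick a measure `μ_j` that is `1 / (2 (i + 1))`-close to `μ`
uniformly on `L`, and round its weights to multiples of `1 / m`: repeating the resulting word of
length `m` periodically gives a sequence in `supp μ_j` whose averages over any `n` terms are
within `1 / (i + 1) + O(m / n)` of `μ f`. The required sequence runs through these periodic
sequences one after the other, spending on the `i`-th one a stretch so long that everything
before it, together with one period of the `i`-th and `(i + 1)`-st words, is negligible.
-/

open Finset

theorem abs_sum_range_le_mul {g : ℕ → ℝ} {B : ℝ} (hg : ∀ k, |g k| ≤ B) (n : ℕ) :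
    |∑ k ∈ range n, g k| ≤ n * B :=
  (abs_sum_le_sum_abs _ _).trans (by simpa using sum_le_card_nsmul (range n) _ B fun k _ => hg k)

theorem abs_sum_range_le_of_periodic {v : ℕ → ℝ} {ℓ : ℕ} (hℓ : 0 < ℓ)
    (hv : Function.Periodic v ℓ) {a B : ℝ} (ha : 0 ≤ a) (hB : ∀ k, |v k| ≤ B)
    (hperiod : |∑ k ∈ range ℓ, v k| ≤ ℓ * a) (n : ℕ) :
    |∑ k ∈ range n, v k| ≤ n * a + ℓ * B := by
  induction n using Nat.strong_induction_on with
  | _ n ih =>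
  rcases lt_or_ge n ℓ with hn | hn
  · have hB0 : 0 ≤ B := (abs_nonneg _).trans (hB 0)
    have hnℓ : (n : ℝ) ≤ ℓ := by exact_mod_cast hn.le
    nlinarith [abs_sum_range_le_mul hB n]
  · obtain ⟨m, rfl⟩ := Nat.exists_eq_add_of_le hn
    have hshift : ∀ k, v (ℓ + k) = v k := fun k => by rw [add_comm]; exact hv k
    rw [sum_range_add]
    simp only [hshift]
    calc |∑ k ∈ range ℓ, v k + ∑ k ∈ range m, v k|
        ≤ |∑ k ∈ range ℓ, v k| + |∑ k ∈ range m, v k| := abs_add_le _ _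
      _ ≤ ↑(ℓ + m) * a + ℓ * B := by push_cast; linarith [ih m (by omega)]

theorem abs_sum_mul_le_one {X : Type*} {s : Finset X} {w f : X → ℝ} (hw : ∀ x ∈ s, 0 ≤ w x)
    (hwsum : ∑ x ∈ s, w x = 1) (hf : ∀ x ∈ s, |f x| ≤ 1) : |∑ x ∈ s, w x * f x| ≤ 1 := by
  refine (abs_sum_le_sum_abs _ _).trans ((sum_le_sum fun x hx => ?_).trans hwsum.le)
  rw [abs_mul, abs_of_nonneg (hw x hx)]
  exact mul_le_of_le_one_right (hw x hx) (hf x hx)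

theorem List.exists_periodic_sum_map_eq {X : Type*} (l : List X) (hl : 0 < l.length) :
    ∃ u : ℕ → X, (∀ k, u k ∈ l) ∧ Function.Periodic u l.length ∧
      ∀ g : X → ℝ, ∑ k ∈ Finset.range l.length, g (u k) = (l.map g).sum := by
  refine ⟨fun k => l[k % l.length]'(Nat.mod_lt _ hl), fun k => List.getElem_mem _,
    fun k => by simp, fun g => ?_⟩
  rw [Finset.sum_range, ← Fin.sum_univ_fun_getElem]
  exact Finset.sum_congr rfl fun k _ => by simp [Nat.mod_eq_of_lt k.2]

theorem Multiset.exists_periodic_sum_map_eq {X : Type*} (M : Multiset X) (hM : 0 < M.card) :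
    ∃ u : ℕ → X, (∀ k, u k ∈ M) ∧ Function.Periodic u M.card ∧
      ∀ g : X → ℝ, ∑ k ∈ Finset.range M.card, g (u k) = (M.map g).sum := by
  simpa using M.toList.exists_periodic_sum_map_eq (by simpa using hM)

theorem exists_periodic_empirical_approx {X : Type*} {s : Finset X} {w : X → ℝ}
    (hw : ∀ x ∈ s, 0 ≤ w x) (hwsum : ∑ x ∈ s, w x = 1) {m : ℕ} (hm : 0 < m) :
    ∃ u : ℕ → X, (∀ k, u k ∈ s) ∧ Function.Periodic u m ∧
      ∀ f : X → ℝ, (∀ x ∈ s, |f x| ≤ 1) →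
        |∑ k ∈ range m, f (u k) - m * ∑ x ∈ s, w x * f x| ≤ 2 * #s := by
  obtain ⟨x₀, hx₀⟩ : s.Nonempty := nonempty_of_sum_ne_zero (hwsum ▸ one_ne_zero)
  -- round every `m * w x` down and give the missing mass `r` to `x₀`
  set c : X → ℕ := fun x => ⌊m * w x⌋₊
  set d : X → ℝ := fun x => m * w x - c x
  have hd : ∀ x ∈ s, 0 ≤ d x ∧ d x ≤ 1 := fun x hx =>
    ⟨sub_nonneg.2 (Nat.floor_le (by have := hw x hx; positivity)),
      by linarith [Nat.lt_floor_add_one ((m : ℝ) * w x)]⟩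
  have hcd : ((∑ x ∈ s, c x : ℕ) : ℝ) + ∑ x ∈ s, d x = m := by
    simp [d, sum_sub_distrib, ← mul_sum, hwsum]
  have hcle : ∑ x ∈ s, c x ≤ m := by
    exact_mod_cast (le_add_of_nonneg_right (sum_nonneg fun x hx => (hd x hx).1)).trans hcd.le
  set r := m - ∑ x ∈ s, c x
  have hr : (r : ℝ) = ∑ x ∈ s, d x := by rw [Nat.cast_sub hcle]; linarith
  set M : Multiset X := ∑ x ∈ s, c x • {x} + r • {x₀}
  have hMcard : M.card = m := by simpa [M] using Nat.add_sub_cancel' hcle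
  obtain ⟨u, huM, hper, hsum⟩ := M.exists_periodic_sum_map_eq (hMcard ▸ hm)
  rw [hMcard] at hper hsum
  refine ⟨u, fun k => ?_, hper, fun f hf => ?_⟩
  · rcases (by simpa [M] using huM k : u k ∈ s ∧ c (u k) ≠ 0 ∨ r ≠ 0 ∧ u k = x₀) with h | h
    exacts [h.1, h.2 ▸ hx₀]
  · have hMsum : (M.map f).sum = m * ∑ x ∈ s, w x * f x + (r * f x₀ - ∑ x ∈ s, d x * f x) := by
      rw [Multiset.map_add, Multiset.sum_add, ← Multiset.coe_mapAddMonoidHom, map_sum,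
        ← Multiset.coe_sumAddMonoidHom, map_sum]
      simp only [Multiset.mapAddMonoidHom_apply, Multiset.map_nsmul, Multiset.map_singleton,
        Multiset.coe_sumAddMonoidHom, Multiset.sum_nsmul, Multiset.sum_singleton, nsmul_eq_mul,
        mul_sum, sub_mul, mul_assoc, sum_sub_distrib, d]
      ring
    have hdf : |∑ x ∈ s, d x * f x| ≤ ∑ x ∈ s, d x :=
      (abs_sum_le_sum_abs _ _).trans <| sum_le_sum fun x hx => by
        rw [abs_mul, abs_of_nonneg (hd x hx).1]
        exact mul_le_of_le_one_right (hd x hx).1 (hf x hx)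
    have hrf : |r * f x₀| ≤ ∑ x ∈ s, d x := by
      rw [abs_mul, Nat.abs_cast, ← hr]
      exact mul_le_of_le_one_right r.cast_nonneg (hf x₀ hx₀)
    have hds : ∑ x ∈ s, d x ≤ #s := by simpa using sum_le_sum fun x hx => (hd x hx).2
    rw [hsum, hMsum, add_sub_cancel_left]
    linarith [abs_sub (r * f x₀) (∑ x ∈ s, d x * f x)]

theorem exists_periodic_approx_of_close {X : Type*} {L : Set (X → ℝ)}
    (hL : ∀ f ∈ L, ∀ x, |f x| ≤ 1) {s : Finset X} {w : X → ℝ} (hw : ∀ x ∈ s, 0 ≤ w x)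
    (hwsum : ∑ x ∈ s, w x = 1) {μ : (X → ℝ) → ℝ} {η : ℝ} (hη : 0 < η)
    (hclose : ∀ f ∈ L, |∑ x ∈ s, w x * f x - μ f| ≤ η / 2) :
    ∃ ℓ : ℕ, 0 < ℓ ∧ ∃ u : ℕ → X, (∀ k, u k ∈ s) ∧ Function.Periodic u ℓ ∧
      ∀ f ∈ L, |∑ k ∈ range ℓ, f (u k) - ℓ * μ f| ≤ ℓ * η := by
  obtain ⟨m, hm⟩ := exists_nat_gt (4 * #s / η)
  have hm0 : 0 < m := by exact_mod_cast (by positivity : (0 : ℝ) ≤ 4 * #s / η).trans_lt hm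
  rw [div_lt_iff₀ hη] at hm
  obtain ⟨u, hus, hper, hu⟩ := exists_periodic_empirical_approx hw hwsum hm0
  refine ⟨m, hm0, u, hus, hper, fun f hf => ?_⟩
  have hround := hu f fun x _ => hL f hf x
  have hlimit : |m * ∑ x ∈ s, w x * f x - m * μ f| ≤ m * (η / 2) := by
    rw [← mul_sub, abs_mul, Nat.abs_cast]
    exact mul_le_mul_of_nonneg_left (hclose f hf) m.cast_nonneg
  linarith [abs_sub_le (∑ k ∈ range m, f (u k)) (m * ∑ x ∈ s, w x * f x) (m * μ f)]

section Concatenation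

variable {X : Type*} {T : ℕ → ℕ}

theorem exists_mem_Ico_of_strictMono (hT : StrictMono T) (hT0 : T 0 = 0) (n : ℕ) :
    ∃ i, T i ≤ n ∧ n < T (i + 1) := by
  classical
  have hex : ∃ i, n < T (i + 1) := ⟨n, n.lt_succ_self.trans_le (hT.id_le _)⟩
  refine ⟨Nat.find hex, ?_, Nat.find_spec hex⟩
  cases h : Nat.find hex with
  | zero => simp [hT0]
  | succ i => exact not_lt.1 (Nat.find_min hex (h ▸ i.lt_succ_self))

theorem exists_seq_segment_eq (hT : StrictMono T) (hT0 : T 0 = 0) (y : ℕ → ℕ → X) :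
    ∃ seq : ℕ → X, ∀ i k, T i + k < T (i + 1) → seq (T i + k) = y i k := by
  choose idx hidx using exists_mem_Ico_of_strictMono hT hT0
  refine ⟨fun n => y (idx n) (n - T (idx n)), fun i k hk => ?_⟩
  have h := hidx (T i + k)
  have : idx (T i + k) = i := by
    have h₁ := hT.lt_iff_lt.1 (h.1.trans_lt hk)
    have h₂ := hT.lt_iff_lt.1 ((Nat.le_add_right _ _).trans_lt h.2)
    omega
  simp [this]

theorem sum_range_segment_add {seq : ℕ → X} {y : ℕ → ℕ → X}
    (hseq : ∀ i k, T i + k < T (i + 1) → seq (T i + k) = y i k) (φ : X → ℝ) {i r : ℕ}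
    (hr : T i + r ≤ T (i + 1)) :
    ∑ k ∈ range (T i + r), φ (seq k) = ∑ k ∈ range (T i), φ (seq k) + ∑ k ∈ range r, φ (y i k) := by
  rw [sum_range_add]
  exact congrArg _ (sum_congr rfl fun k hk => by rw [hseq i k (by simp at hk; omega)])

theorem strictMono_of_growth {ℓ : ℕ → ℕ}
    (hT : ∀ i, (i + 1) * (T i + ℓ i + ℓ (i + 1)) < T (i + 1)) : StrictMono T :=
  strictMono_nat_of_lt_succ fun i => by nlinarith [hT i]

theorem abs_sum_concat_le {ℓ : ℕ → ℕ} (hT : ∀ i, (i + 1) * (T i + ℓ i + ℓ (i + 1)) < T (i + 1))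
    {seq : ℕ → X} {y : ℕ → ℕ → X} (hseq : ∀ i k, T i + k < T (i + 1) → seq (T i + k) = y i k)
    {φ : X → ℝ} {B : ℝ} (hφ : ∀ x, |φ x| ≤ B)
    (hy : ∀ i n, |∑ k ∈ range n, φ (y i k)| ≤ n / (i + 1) + ℓ i * B)
    {i N : ℕ} (hN : T (i + 1) ≤ N) (hN' : N ≤ T (i + 1 + 1)) :
    |∑ k ∈ range N, φ (seq k)| ≤ (B + 1) / (i + 1) * N := by
  have hB : 0 ≤ B := (abs_nonneg _).trans (hφ (y 0 0))
  have hq : (0 : ℝ) < i + 1 := by positivity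
  obtain ⟨r, rfl⟩ := Nat.exists_eq_add_of_le hN
  obtain ⟨m, hm⟩ := Nat.exists_eq_add_of_le (strictMono_of_growth hT (Nat.lt_add_one i)).le
  have hsplit : ∑ k ∈ range (T (i + 1)), φ (seq k) =
      ∑ k ∈ range (T i), φ (seq k) + ∑ k ∈ range m, φ (y i k) := by
    rw [hm]; exact sum_range_segment_add hseq φ hm.ge
  rw [sum_range_segment_add hseq φ hN', hsplit]
  have hpast : |∑ k ∈ range (T i), φ (seq k)| ≤ T i * B :=
    abs_sum_range_le_mul (fun k => hφ _) _
  have hcur := hy i m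
  have hnext : |∑ k ∈ range r, φ (y (i + 1) k)| ≤ r / (i + 1) + ℓ (i + 1) * B :=
    (hy (i + 1) r).trans <| by gcongr; linarith
  -- the growth condition makes the past and one period of each block negligible
  have hgrowth : ((T i + ℓ i + ℓ (i + 1) : ℕ) : ℝ) ≤ ↑(T (i + 1) + r) / (i + 1) := by
    rw [le_div_iff₀ hq, mul_comm]; exact_mod_cast (hT i).le.trans (Nat.le_add_right _ _)
  have hmr : ((m + r : ℕ) : ℝ) ≤ ↑(T (i + 1) + r) := by exact_mod_cast (by omega)
  calc |∑ k ∈ range (T i), φ (seq k) + ∑ k ∈ range m, φ (y i k) + ∑ k ∈ range r, φ (y (i + 1) k)|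
      ≤ T i * B + (m / (i + 1) + ℓ i * B) + (r / (i + 1) + ℓ (i + 1) * B) :=
        (abs_add_le _ _).trans (add_le_add ((abs_add_le _ _).trans (add_le_add hpast hcur)) hnext)
    _ = ((T i + ℓ i + ℓ (i + 1) : ℕ) : ℝ) * B + ((m + r : ℕ) : ℝ) / (i + 1) := by push_cast; ring
    _ ≤ ↑(T (i + 1) + r) / (i + 1) * B + ↑(T (i + 1) + r) / (i + 1) := by gcongr
    _ = (B + 1) / (i + 1) * ↑(T (i + 1) + r) := by ring

end Concatenation

def segStart (ℓ : ℕ → ℕ) : ℕ → ℕ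
  | 0 => 0
  | i + 1 => (i + 1) * (segStart ℓ i + ℓ i + ℓ (i + 1)) + 1

theorem exists_seq_abs_sum_le {X : Type*} (B : ℝ) (ℓ : ℕ → ℕ) (y : ℕ → ℕ → X) :
    ∃ seq : ℕ → X, (∀ n, ∃ i k, seq n = y i k) ∧ ∀ ε > 0, ∃ N₀, ∀ N ≥ N₀, ∀ φ : X → ℝ,
      (∀ x, |φ x| ≤ B) → (∀ i n, |∑ k ∈ range n, φ (y i k)| ≤ n / (i + 1) + ℓ i * B) →
        |∑ k ∈ range N, φ (seq k)| ≤ ε * N := by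
  set T := segStart ℓ
  have hgrowth : ∀ i, (i + 1) * (T i + ℓ i + ℓ (i + 1)) < T (i + 1) :=
    fun i => Nat.lt_succ_self _
  have hT := strictMono_of_growth hgrowth
  obtain ⟨seq, hseq⟩ := exists_seq_segment_eq hT rfl y
  refine ⟨seq, fun n => ?_, fun ε hε => ?_⟩
  · obtain ⟨i, hi, hi'⟩ := exists_mem_Ico_of_strictMono hT rfl n
    obtain ⟨k, rfl⟩ := Nat.exists_eq_add_of_le hi
    exact ⟨i, k, hseq i k hi'⟩
  · obtain ⟨i₀, hi₀⟩ := exists_nat_gt ((B + 1) / ε)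
    rw [div_lt_iff₀ hε] at hi₀
    refine ⟨T (i₀ + 1), fun N hN φ hφ hy => ?_⟩
    obtain ⟨i, hi, hi'⟩ := exists_mem_Ico_of_strictMono hT rfl N
    have hi₀i : i₀ + 1 < i + 1 := hT.lt_iff_lt.1 (hN.trans_lt hi')
    obtain ⟨j, rfl⟩ : ∃ j, i = j + 1 := ⟨i - 1, by omega⟩
    refine (abs_sum_concat_le hgrowth hseq hφ hy hi hi'.le).trans
      (mul_le_mul_of_nonneg_right ?_ N.cast_nonneg)
    have : (i₀ : ℝ) ≤ j + 1 := by exact_mod_cast (by omega : i₀ ≤ j + 1)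
    rw [div_le_iff₀ (by positivity)]
    nlinarith

theorem abs_inv_mul_sub_le_of_abs_sub_le {S c ε : ℝ} {N : ℕ} (hN : 0 < N)
    (h : |S - N * c| ≤ ε * N) : |(N : ℝ)⁻¹ * S - c| ≤ ε := by
  have hN' : (0 : ℝ) < N := by exact_mod_cast hN
  have hsplit : (N : ℝ)⁻¹ * S - c = (N : ℝ)⁻¹ * (S - N * c) := by
    rw [mul_sub, inv_mul_cancel_left₀ hN'.ne']
  rwa [hsplit, abs_mul, abs_of_pos (inv_pos.2 hN'), inv_mul_le_iff₀ hN', mul_comm (N : ℝ) ε]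

theorem stmt2_general {X : Type*} (L : Set (X → ℝ))
    (hL : ∀ f ∈ L, ∀ x, |f x| ≤ 1)
    (s : ℕ → Finset X) (w : ℕ → X → ℝ)
    (hw : ∀ j, ∀ x ∈ s j, 0 < w j x)
    (hwsum : ∀ j, ∑ x ∈ s j, w j x = 1)
    (μ : (X → ℝ) → ℝ)
    (hconv : ∀ ε : ℝ, 0 < ε → ∃ J : ℕ, ∀ j ≥ J, ∀ f ∈ L,
      |(∑ x ∈ s j, w j x * f x) - μ f| ≤ ε) :
    ∃ seq : ℕ → X, (∀ n, ∃ j, seq n ∈ s j) ∧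
      ∀ ε : ℝ, 0 < ε → ∃ N₀ : ℕ, ∀ N ≥ N₀, ∀ f ∈ L,
        |(N : ℝ)⁻¹ * (∑ k ∈ Finset.range N, f (seq k)) - μ f| ≤ ε := by
  have hw' : ∀ j, ∀ x ∈ s j, 0 ≤ w j x := fun j x hx => (hw j x hx).le
  have hμ : ∀ f ∈ L, |μ f| ≤ 1 := fun f hf => le_of_forall_pos_le_add fun ε hε => by
    obtain ⟨J, hJ⟩ := hconv ε hε
    have hμJ : |μ f| ≤ |∑ x ∈ s J, w J x * f x| + |∑ x ∈ s J, w J x * f x - μ f| := by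
      simpa using abs_sub (∑ x ∈ s J, w J x * f x) (∑ x ∈ s J, w J x * f x - μ f)
    linarith [abs_sum_mul_le_one (hw' J) (hwsum J) fun x _ => hL f hf x, hJ J le_rfl f hf]
  have hblock (i : ℕ) : ∃ j ℓ, 0 < ℓ ∧ ∃ u : ℕ → X, (∀ k, u k ∈ s j) ∧ Function.Periodic u ℓ ∧
      ∀ f ∈ L, |∑ k ∈ range ℓ, f (u k) - ℓ * μ f| ≤ ℓ * (1 / (i + 1)) := by
    obtain ⟨J, hJ⟩ := hconv (1 / (i + 1) / 2) (by positivity)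
    exact ⟨J, exists_periodic_approx_of_close hL (hw' J) (hwsum J) (by positivity) (hJ J le_rfl)⟩
  choose j ℓ hℓ u hu hper happrox using hblock
  obtain ⟨seq, hseq, hsmall⟩ := exists_seq_abs_sum_le 2 ℓ u
  refine ⟨seq, fun n => ?_, fun ε hε => ?_⟩
  · obtain ⟨i, k, h⟩ := hseq n
    exact ⟨j i, h ▸ hu i k⟩
  obtain ⟨N₀, hN₀⟩ := hsmall ε hε
  refine ⟨max N₀ 1, fun N hN f hf => ?_⟩
  have hφ (x : X) : |f x - μ f| ≤ 2 := (abs_sub _ _).trans (by linarith [hL f hf x, hμ f hf])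
  have hy (i n : ℕ) : |∑ k ∈ range n, (f (u i k) - μ f)| ≤ n / (i + 1) + ℓ i * 2 := by
    rw [← mul_one_div]
    refine abs_sum_range_le_of_periodic (hℓ i) ((hper i).comp fun x => f x - μ f) (by positivity)
      (fun k => hφ _) ?_ n
    simpa [sum_sub_distrib] using happrox i f hf
  refine abs_inv_mul_sub_le_of_abs_sub_le (le_of_max_le_right hN) ?_
  simpa [sum_sub_distrib] using hN₀ N (le_of_max_le_left hN) _ hφ hy

/-- Let `L` be a subset of the closed unit ball of `ℓ∞(X)` and
`(μ_j)` a sequence of finitely supported probability measures on `X` (given by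
finite supports `s j` and weights `w j`), converging to a function `μ`
uniformly on `L`.  Then there is a sequence `(x_n)` of points of
`⋃_j supp μ_j` whose averages `(1/N)·∑_{k<N} f (x_k)` converge to `μ f`
uniformly in `f ∈ L`. -/
theorem stmt2 {X : Type*} [Nonempty X] (L : Set (X → ℝ))
    (hL : ∀ f ∈ L, ∀ x, |f x| ≤ 1)
    (s : ℕ → Finset X) (w : ℕ → X → ℝ)
    (hw : ∀ j, ∀ x ∈ s j, 0 < w j x)
    (hwsum : ∀ j, ∑ x ∈ s j, w j x = 1)
    (μ : (X → ℝ) → ℝ)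
    (hconv : ∀ ε : ℝ, 0 < ε → ∃ J : ℕ, ∀ j ≥ J, ∀ f ∈ L,
      |(∑ x ∈ s j, w j x * f x) - μ f| ≤ ε) :
    ∃ seq : ℕ → X, (∀ n, ∃ j, seq n ∈ s j) ∧
      ∀ ε : ℝ, 0 < ε → ∃ N₀ : ℕ, ∀ N ≥ N₀, ∀ f ∈ L,
        |(N : ℝ)⁻¹ * (∑ k ∈ Finset.range N, f (seq k)) - μ f| ≤ ε :=
  stmt2_general L hL s w hw hwsum μ hconv
end

section
/- Let E be a real Banach space, R > 0, and let F be a subset of E contained in the closed ball of radius R centered at 0. Let x ∈ co(F) and let F₀ ⊆ F be a finite set with x ∈ co(F₀), say |F₀| = m. Set C = (m−1)·⌊m/2⌋. Then there is a sequence (x_n)_{n≥1} of points of F₀ such that ‖(1/N)·Σ_{k=1}^N x_k − x‖ ≤ (2R/N)·(1 + C) for all N ≥ 1; in particular (1/N)·Σ_{k=1}^N x_k converges in norm to x as N → ∞. -/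
open Filter Finset

/-- Let `E` be a real Banach space, `F ⊆ closedBall 0 R`,
`x ∈ co F₀` where `F₀ ⊆ F` is finite with `|F₀| = m`, `C = (m-1)·⌊m/2⌋`.
Then there is a sequence in `F₀` whose averages approximate `x` with error
at most `(2R/N)·(1+C)`; in particular the averages converge in norm to `x`. -/
theorem stmt3 {E : Type*} [NormedAddCommGroup E] [NormedSpace ℝ E] [CompleteSpace E]
    (R : ℝ) (hR : 0 < R) (F : Set E) (hF : F ⊆ Metric.closedBall 0 R)
    (x : E) (hx : x ∈ convexHull ℝ F)
    (F₀ : Finset E) (hF₀F : (F₀ : Set E) ⊆ F) (hx₀ : x ∈ convexHull ℝ (F₀ : Set E)) :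
    ∃ seq : ℕ → E, (∀ n, seq n ∈ F₀) ∧
      (∀ N : ℕ, 1 ≤ N →
        ‖(N : ℝ)⁻¹ • (∑ k ∈ Finset.range N, seq k) - x‖
          ≤ 2 * R / N * (1 + (((F₀.card - 1) * (F₀.card / 2) : ℕ) : ℝ))) ∧
      Tendsto (fun N : ℕ => (N : ℝ)⁻¹ • (∑ k ∈ Finset.range N, seq k))
        atTop (nhds x) := by
  classical
  -- F₀ is nonempty
  have hne : F₀.Nonempty := by
    rcases F₀.eq_empty_or_nonempty with h | h
    · rw [h] at hx₀; simp at hx₀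
    · exact h
  set m := F₀.card with hm
  have hm1 : 1 ≤ m := Finset.card_pos.mpr hne
  -- extract weights
  rw [Finset.convexHull_eq] at hx₀
  obtain ⟨w, hw0, hw1, hwx⟩ := hx₀
  rw [Finset.centerMass_eq_of_sum_1 _ _ hw1] at hwx
  simp only [id] at hwx
  -- greedy pick
  have hpick : ∀ (c : E → ℕ) (N : ℕ), ∃ b ∈ F₀,
      ∀ y ∈ F₀, w y * (N + 1) - (c y : ℝ) ≤ w b * (N + 1) - (c b : ℝ) := fun c N =>
    F₀.exists_max_image (fun y => w y * (N + 1) - (c y : ℝ)) hne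
  set pk : (E → ℕ) → ℕ → E := fun c N => (hpick c N).choose with hpk
  have hpk_mem : ∀ c N, pk c N ∈ F₀ := fun c N => (hpick c N).choose_spec.1
  have hpk_max : ∀ c N, ∀ y ∈ F₀,
      w y * (N + 1) - (c y : ℝ) ≤ w (pk c N) * (N + 1) - (c (pk c N) : ℝ) :=
    fun c N => (hpick c N).choose_spec.2
  -- counts
  set c : ℕ → E → ℕ := fun N =>
    Nat.rec (fun _ => 0) (fun N cN y => cN y + if y = pk cN N then 1 else 0) N with hc
  have hcsucc : ∀ N y, c (N + 1) y = c N y + if y = pk (c N) N then 1 else 0 := fun N y => rfl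
  set seq : ℕ → E := fun N => pk (c N) N with hseq
  have hmem : ∀ n, seq n ∈ F₀ := fun n => hpk_mem _ _
  -- total count
  have hcsum : ∀ N, ∑ y ∈ F₀, c N y = N := by
    intro N
    induction N with
    | zero => simp [hc]
    | succ N ih =>
      simp only [hcsucc, Finset.sum_add_distrib, ih, Finset.sum_ite_eq', hpk_mem, if_pos]
  -- invariant A : counts never exceed proportional share by 1 or more
  have hA : ∀ N, ∀ y ∈ F₀, (c N y : ℝ) < w y * N + 1 := by
    intro N
    induction N with
    | zero => intro y _; simp [hc]
    | succ N ih =>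
      intro y hy
      rw [hcsucc]
      by_cases hcase : y = pk (c N) N
      · -- chosen point: its deficit was maximal and the total deficit is 1 > 0
        have hcast : (∑ z ∈ F₀, ((c N z : ℝ))) = N := by
          rw [← Nat.cast_sum, hcsum N]
        have hsum : ∑ z ∈ F₀, (w z * (N + 1) - (c N z : ℝ)) = 1 := by
          rw [Finset.sum_sub_distrib, ← Finset.sum_mul, hw1, hcast]
          ring
        have hex : ∃ z ∈ F₀, 0 < w z * (N + 1) - (c N z : ℝ) := by
          by_contra hcon
          push_neg at hcon
          have : ∑ z ∈ F₀, (w z * (N + 1) - (c N z : ℝ)) ≤ 0 :=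
            Finset.sum_nonpos hcon
          linarith [hsum]
        obtain ⟨z, hz, hz0⟩ := hex
        have hmax := hpk_max (c N) N z hz
        rw [← hcase] at hmax
        have hpos : 0 < w y * (N + 1) - (c N y : ℝ) := lt_of_lt_of_le hz0 hmax
        rw [if_pos hcase]
        push_cast
        linarith
      · rw [if_neg hcase]
        have hwy : 0 ≤ w y := hw0 y hy
        have := ih y hy
        push_cast
        push_cast at this
        nlinarith
  -- partial sums in terms of counts
  have hsumseq : ∀ N, ∑ k ∈ Finset.range N, seq k = ∑ y ∈ F₀, (c N y : ℝ) • y := by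
    intro N
    induction N with
    | zero => simp [hc]
    | succ N ih =>
      rw [Finset.sum_range_succ, ih]
      have h1 : ∀ y ∈ F₀, ((c (N + 1) y : ℝ)) • y
          = (c N y : ℝ) • y + (if y = pk (c N) N then (1 : ℝ) else 0) • y := by
        intro y _
        rw [hcsucc]
        push_cast
        rw [add_smul]
      rw [Finset.sum_congr rfl h1, Finset.sum_add_distrib]
      congr 1
      have h2 : ∀ y ∈ F₀, (if y = pk (c N) N then (1 : ℝ) else 0) • y
          = (if y = pk (c N) N then (1 : ℝ) • y else 0) := by
        intro y _; split <;> simp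
      rw [Finset.sum_congr rfl h2,
        Finset.sum_ite_eq' F₀ (pk (c N) N) (fun y => (1 : ℝ) • y),
        if_pos (hpk_mem (c N) N), one_smul]
  -- deviation sum bound
  have hdev : ∀ N : ℕ, ∑ y ∈ F₀, |(c N y : ℝ) - w y * N| ≤ 2 * m := by
    intro N
    have hcast : (∑ z ∈ F₀, ((c N z : ℝ))) = N := by
      rw [← Nat.cast_sum, hcsum N]
    have hzero : ∑ y ∈ F₀, ((c N y : ℝ) - w y * N) = 0 := by
      rw [Finset.sum_sub_distrib, ← Finset.sum_mul, hw1, hcast]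
      ring
    have habs : ∀ y ∈ F₀, |(c N y : ℝ) - w y * N|
        = 2 * max ((c N y : ℝ) - w y * N) 0 - ((c N y : ℝ) - w y * N) := by
      intro y _
      rcases le_or_gt ((c N y : ℝ) - w y * N) 0 with h | h
      · rw [abs_of_nonpos h, max_eq_right h]; ring
      · rw [abs_of_pos h, max_eq_left h.le]; ring
    rw [Finset.sum_congr rfl habs, Finset.sum_sub_distrib, hzero, sub_zero,
      ← Finset.mul_sum]
    have hle : ∑ y ∈ F₀, max ((c N y : ℝ) - w y * N) 0 ≤ ∑ y ∈ F₀, 1 := by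
      apply Finset.sum_le_sum
      intro y hy
      have := hA N y hy
      exact max_le (by linarith) zero_le_one
    simp only [Finset.sum_const, nsmul_eq_mul, mul_one] at hle
    linarith
  -- m ≤ 1 + C
  have hmC : (m : ℝ) ≤ 1 + (((m - 1) * (m / 2) : ℕ) : ℝ) := by
    have : m ≤ 1 + (m - 1) * (m / 2) := by
      rcases Nat.lt_or_ge m 2 with h | h
      · interval_cases m <;> simp
      · have h2 : 1 ≤ m / 2 := (Nat.one_le_div_iff (by norm_num)).mpr h
        have : m - 1 ≤ (m - 1) * (m / 2) := Nat.le_mul_of_pos_right _ (by omega)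
        omega
    exact_mod_cast this
  -- main bound
  have hkey : ∀ N : ℕ, 1 ≤ N →
      ‖(N : ℝ)⁻¹ • (∑ k ∈ Finset.range N, seq k) - x‖
        ≤ 2 * R / N * (1 + (((m - 1) * (m / 2) : ℕ) : ℝ)) := by
    intro N hN
    have hN0 : (0 : ℝ) < N := by exact_mod_cast hN
    rw [hsumseq N, ← hwx]
    have hrepr : (N : ℝ)⁻¹ • (∑ y ∈ F₀, (c N y : ℝ) • y) - ∑ y ∈ F₀, w y • y
        = ∑ y ∈ F₀, (((c N y : ℝ) - w y * N) / N) • y := by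
      rw [Finset.smul_sum, ← Finset.sum_sub_distrib]
      refine Finset.sum_congr rfl fun y _ => ?_
      rw [smul_smul, ← sub_smul]
      congr 1
      field_simp
    rw [hrepr]
    calc ‖∑ y ∈ F₀, (((c N y : ℝ) - w y * N) / N) • y‖
        ≤ ∑ y ∈ F₀, ‖(((c N y : ℝ) - w y * N) / N) • y‖ := norm_sum_le _ _
      _ ≤ ∑ y ∈ F₀, |(c N y : ℝ) - w y * N| / N * R := by
          apply Finset.sum_le_sum
          intro y hy
          rw [norm_smul, Real.norm_eq_abs, abs_div, abs_of_pos hN0]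
          have hyR : ‖y‖ ≤ R := by
            have := hF (hF₀F hy)
            rwa [Metric.mem_closedBall, dist_zero_right] at this
          exact mul_le_mul_of_nonneg_left hyR (by positivity)
      _ = R / N * ∑ y ∈ F₀, |(c N y : ℝ) - w y * N| := by
          rw [Finset.mul_sum]
          exact Finset.sum_congr rfl fun y _ => by ring
      _ ≤ R / N * (2 * m) := by
          exact mul_le_mul_of_nonneg_left (hdev N) (by positivity)
      _ ≤ 2 * R / N * (1 + (((m - 1) * (m / 2) : ℕ) : ℝ)) := by
          have h1 : R / N * (2 * m) = 2 * R / N * (m : ℝ) := by ring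
          rw [h1]
          exact mul_le_mul_of_nonneg_left hmC (by positivity)
  refine ⟨seq, hmem, hkey, ?_⟩
  rw [← tendsto_sub_nhds_zero_iff]
  apply squeeze_zero_norm' (a := fun N : ℕ => (2 * R * (1 + (((m - 1) * (m / 2) : ℕ) : ℝ))) / N)
  · filter_upwards [eventually_ge_atTop 1] with N hN
    calc ‖(N : ℝ)⁻¹ • (∑ k ∈ Finset.range N, seq k) - x‖
        ≤ 2 * R / N * (1 + (((m - 1) * (m / 2) : ℕ) : ℝ)) := hkey N hN
      _ = (2 * R * (1 + (((m - 1) * (m / 2) : ℕ) : ℝ))) / N := by ring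
  · exact tendsto_const_div_atTop_nhds_zero_nat _
end

section
/- Let K be a totally disconnected compact Hausdorff space and let C(K) be the Banach space of continuous real-valued functions on K with the supremum norm. Then for every f in the closed unit ball B of C(K) there exists a sequence (f_n)_{n≥1} of extreme points of B (equivalently, of continuous functions with |f_n(x)| = 1 for all x ∈ K) such that (f_1+⋯+f_N)/N converges uniformly on K to f as N → ∞. -/
open Filter Finset

/-- In a compact Hausdorff totally disconnected space, a closed set inside an
open set can be interposed by a clopen set. -/
lemma clopen_between {K : Type*} [TopologicalSpace K] [CompactSpace K] [T2Space K]
    [TotallyDisconnectedSpace K] {A W : Set K} (hA : IsClosed A) (hW : IsOpen W)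
    (hAW : A ⊆ W) : ∃ U : Set K, IsClopen U ∧ A ⊆ U ∧ U ⊆ W := by
  have hAc : IsCompact A := hA.isCompact
  choose! V hV hxV hVW using fun x (hx : x ∈ A) => compact_exists_isClopen_in_isOpen hW (hAW hx)
  obtain ⟨t, ht⟩ := hAc.elim_finite_subcover (fun x : A => V x)
    (fun x => (hV x x.2).2) (fun x hx => Set.mem_iUnion.2 ⟨⟨x, hx⟩, hxV x hx⟩)
  refine ⟨⋃ x ∈ t, V x, isClopen_biUnion_finset (fun x _ => hV x x.2), ht, ?_⟩
  exact Set.iUnion₂_subset fun x _ => hVW x x.2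

/-- Key step: any continuous `g` can be approximated by a `±1`-valued function
with error at most `max 2 (‖g‖ - 1)`. -/
lemma key_step {K : Type*} [TopologicalSpace K] [CompactSpace K] [T2Space K]
    [TotallyDisconnectedSpace K] (g : C(K, ℝ)) :
    ∃ h : C(K, ℝ), (∀ x, |h x| = 1) ∧ ‖g - h‖ ≤ max 2 (‖g‖ - 1) := by
  classical
  obtain ⟨U, hU, hAU, hUW⟩ := clopen_between (A := {x | 1 ≤ g x}) (W := {x | -1 < g x})
    (isClosed_le continuous_const g.continuous)
    (isOpen_lt continuous_const g.continuous)
    (fun x hx => (show (-1:ℝ) < 1 by norm_num).trans_le hx)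
  have hcont : Continuous fun x => if x ∈ U then (1:ℝ) else -1 := by
    apply Continuous.if _ continuous_const continuous_const
    intro a ha
    rw [show {x | x ∈ U} = U from rfl, hU.frontier_eq] at ha
    exact absurd ha (Set.notMem_empty a)
  refine ⟨⟨_, hcont⟩, fun x => by by_cases h : x ∈ U <;> simp [h], ?_⟩
  rw [ContinuousMap.norm_le _ (le_max_of_le_left (by norm_num))]
  intro x
  have hgx : |g x| ≤ ‖g‖ := g.norm_coe_le_norm x
  rw [abs_le] at hgx
  rw [Real.norm_eq_abs, abs_le]
  simp only [ContinuousMap.sub_apply, ContinuousMap.coe_mk]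
  have hM1 : (2:ℝ) ≤ max 2 (‖g‖ - 1) := le_max_left _ _
  have hM2 : ‖g‖ - 1 ≤ max 2 (‖g‖ - 1) := le_max_right _ _
  by_cases h : x ∈ U
  · have h1 : -1 < g x := hUW h
    simp only [h, if_pos]
    constructor <;> linarith [hgx.1, hgx.2]
  · have h1 : g x < 1 := by
      by_contra hc
      exact h (hAU (le_of_not_gt hc))
    simp only [h, if_neg, not_false_iff]
    constructor <;> linarith [hgx.1, hgx.2]

set_option maxHeartbeats 1000000 in
/-- Let `K` be a totally disconnected compact Hausdorff
space.  For every `f` in the closed unit ball of `C(K, ℝ)` there is a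
sequence `(f_n)` of extreme points of the ball (i.e. continuous functions
with `|f_n x| = 1` for all `x`) whose arithmetic means converge uniformly
(i.e. in sup-norm) to `f`. -/
theorem stmt8 {K : Type*} [TopologicalSpace K] [CompactSpace K] [T2Space K]
    [TotallyDisconnectedSpace K]
    (f : C(K, ℝ)) (hf : ‖f‖ ≤ 1) :
    ∃ fseq : ℕ → C(K, ℝ), (∀ n, ∀ x : K, |fseq n x| = 1) ∧
      Tendsto (fun N : ℕ => (N : ℝ)⁻¹ • (∑ k ∈ Finset.range N, fseq k))
        atTop (nhds f) := by
  classical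
  choose H h1 h2 using key_step (K := K)
  -- partial sums
  let S : ℕ → C(K, ℝ) := fun n => Nat.rec 0 (fun n Sn => Sn + H (((n:ℝ)+1) • f - Sn)) n
  have hS0 : S 0 = 0 := rfl
  have hSsucc : ∀ n, S (n + 1) = S n + H (((n:ℝ)+1) • f - S n) := fun n => rfl
  set fseq : ℕ → C(K, ℝ) := fun n => H (((n:ℝ)+1) • f - S n) with hfseq
  have hsum : ∀ N, ∑ k ∈ Finset.range N, fseq k = S N := by
    intro N
    induction N with
    | zero => simp [hS0]
    | succ n ih => rw [Finset.sum_range_succ, ih, hSsucc]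
  have hbound : ∀ N : ℕ, ‖(N:ℝ) • f - S N‖ ≤ 2 := by
    intro N
    induction N with
    | zero => simp [hS0]
    | succ n ih =>
      have hg : ‖((n:ℝ)+1) • f - S n‖ ≤ 3 := by
        have : ((n:ℝ)+1) • f - S n = ((n:ℝ) • f - S n) + f := by push_cast; ring_nf; module
        calc ‖((n:ℝ)+1) • f - S n‖ = ‖((n:ℝ) • f - S n) + f‖ := by rw [this]
          _ ≤ ‖(n:ℝ) • f - S n‖ + ‖f‖ := norm_add_le _ _
          _ ≤ 2 + 1 := add_le_add ih hf
          _ = 3 := by norm_num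
      have := h2 (((n:ℝ)+1) • f - S n)
      have heq : ((n+1:ℕ):ℝ) • f - S (n+1) = (((n:ℝ)+1) • f - S n) - fseq n := by
        rw [hSsucc]; push_cast; simp [hfseq]; module
      rw [heq]
      calc ‖(((n:ℝ)+1) • f - S n) - fseq n‖ ≤ max 2 (‖((n:ℝ)+1) • f - S n‖ - 1) := this
        _ ≤ max 2 (3 - 1) := max_le_max le_rfl (by linarith)
        _ = 2 := by norm_num
  refine ⟨fseq, fun n => h1 _, ?_⟩
  rw [tendsto_iff_norm_sub_tendsto_zero]
  have hle : ∀ N : ℕ, 1 ≤ N → ‖(N : ℝ)⁻¹ • (∑ k ∈ Finset.range N, fseq k) - f‖ ≤ 2 / N := by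
    intro N hN
    have hNpos : (0:ℝ) < N := by exact_mod_cast hN
    rw [hsum]
    have : (N : ℝ)⁻¹ • S N - f = -((N:ℝ)⁻¹ • ((N:ℝ) • f - S N)) := by
      rw [smul_sub, smul_smul, inv_mul_cancel₀ hNpos.ne', one_smul]; module
    rw [this, norm_neg]
    have hns : ‖(N:ℝ)⁻¹ • ((N:ℝ) • f - S N)‖ = ‖(N:ℝ)⁻¹‖ * ‖(N:ℝ) • f - S N‖ :=
      norm_smul ((N:ℝ)⁻¹) ((N:ℝ) • f - S N)
    rw [hns, Real.norm_eq_abs, abs_of_nonneg (by positivity)]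
    rw [div_eq_inv_mul]
    exact mul_le_mul_of_nonneg_left (hbound N) (by positivity)
  have h0 : Tendsto (fun N : ℕ => 2 / (N:ℝ)) atTop (nhds 0) :=
    tendsto_const_div_atTop_nhds_zero_nat 2
  refine squeeze_zero_norm' ?_ h0
  filter_upwards [eventually_ge_atTop 1] with N hN
  rw [Real.norm_eq_abs, abs_of_nonneg (norm_nonneg _)]
  exact hle N hN
end

section
/- Let E be a separable real Banach space, let F be a bounded subset of the dual space E*, and let f belong to the weak* closure of the convex hull of F. Then there is a sequence (f_n)_{n≥1} of points of F such that (f_1+⋯+f_N)/N converges to f in the weak* topology of E*, i.e. for every x ∈ E, (1/N)·Σ_{k=1}^N f_k(x) → f(x) as N → ∞. -/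
/-!
Let `u` be a dense sequence in `E`, rescaled to `a i = w i • u i` with `‖a i‖ ≤ 2⁻ⁱ`. The
analysis operator `T g = (g (a i))ᵢ` sends `E*` into `ℓ²`, and its adjoint relation
`⟪v, T g⟫ = g (∑ vᵢ aᵢ)` turns `f ∈ closure (convexHull F)` into: for every `v`, some `g ∈ F`
has `⟪v, T g - T f⟫` as small as we like. In a Hilbert space this suffices for a greedy
construction: choosing each new term `x` with `⟪e, x - T f⟫ < 1`, where `e` is the current error
sum, keeps `‖e‖² = O(N)`, so the Cesàro means converge to `T f` in norm. Pairing with `v ∈ ℓ²`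
gives convergence at every point `∑ vᵢ aᵢ`, a dense set containing all `u i`, and the uniform
bound on `F` extends this to all of `E`.
-/

open Filter Finset Topology
open scoped NNReal lp

section Greedy

variable {H : Type*} [NormedAddCommGroup H] [InnerProductSpace ℝ H]

theorem exists_seq_norm_sum_sub_sq_le {K : Set H} {y : H} {D c : ℝ}
    (hK : ∀ x ∈ K, ‖x - y‖ ≤ D) (hy : ∀ v : H, ∃ x ∈ K, inner ℝ v (x - y) ≤ c) :
    ∃ s : ℕ → H, (∀ n, s n ∈ K) ∧
      ∀ N : ℕ, ‖∑ k ∈ range N, (s k - y)‖ ^ 2 ≤ (D ^ 2 + 2 * c) * N := by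
  choose pick hpickK hpick using hy
  let e : ℕ → H := fun N => Nat.rec 0 (fun _ e => e + (pick e - y)) N
  have he : ∀ N, e N = ∑ k ∈ range N, (pick (e k) - y) := by
    intro N
    induction N with
    | zero => rfl
    | succ N ih => rw [sum_range_succ, ← ih]
  refine ⟨fun n => pick (e n), fun n => hpickK _, fun N => ?_⟩
  rw [← he]
  induction N with
  | zero => simp [e]
  | succ N ih =>
    change ‖e N + (pick (e N) - y)‖ ^ 2 ≤ _
    rw [norm_add_sq_real]
    push_cast
    nlinarith [hpick (e N), hK _ (hpickK (e N)), norm_nonneg (pick (e N) - y)]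

theorem exists_seq_tendsto_cesaro_of_forall_inner_lt {K : Set H} (hK : Bornology.IsBounded K)
    {y : H} (hy : ∀ v : H, ∀ δ > 0, ∃ x ∈ K, inner ℝ v (x - y) < δ) :
    ∃ s : ℕ → H, (∀ n, s n ∈ K) ∧
      Tendsto (fun N : ℕ => (N : ℝ)⁻¹ • ∑ k ∈ range N, s k) atTop (𝓝 y) := by
  obtain ⟨D, hD⟩ := hK.subset_closedBall y
  obtain ⟨s, hsK, hs⟩ := exists_seq_norm_sum_sub_sq_le (D := D) (c := 1)
    (fun x hx => by simpa [dist_eq_norm] using hD hx)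
    (fun v => (hy v 1 one_pos).imp fun _ ⟨hx, hlt⟩ => ⟨hx, hlt.le⟩)
  simp only [mul_one] at hs
  refine ⟨s, hsK, ?_⟩
  have hlim : Tendsto (fun N : ℕ => Real.sqrt ((D ^ 2 + 2) / N)) atTop (𝓝 0) := by
    simpa using (tendsto_const_div_atTop_nhds_zero_nat (D ^ 2 + 2)).sqrt
  rw [tendsto_iff_norm_sub_tendsto_zero]
  refine squeeze_zero' (Eventually.of_forall fun _ => norm_nonneg _) ?_ hlim
  filter_upwards [eventually_gt_atTop 0] with N hN
  have hN' : (0 : ℝ) < N := by exact_mod_cast hN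
  have hmean : (N : ℝ)⁻¹ • ∑ k ∈ range N, s k - y = (N : ℝ)⁻¹ • ∑ k ∈ range N, (s k - y) := by
    rw [sum_sub_distrib, smul_sub, sum_const, card_range, ← Nat.cast_smul_eq_nsmul ℝ,
      smul_smul, inv_mul_cancel₀ hN'.ne', one_smul]
  rw [hmean, norm_smul, Real.le_sqrt (by positivity) (by positivity), mul_pow,
    Real.norm_of_nonneg (by positivity), le_div_iff₀ hN']
  calc ((N : ℝ)⁻¹) ^ 2 * ‖∑ k ∈ range N, (s k - y)‖ ^ 2 * N
      = ‖∑ k ∈ range N, (s k - y)‖ ^ 2 / N := by field_simp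
    _ ≤ (D ^ 2 + 2) * N / N := by gcongr; exact hs N
    _ = D ^ 2 + 2 := by field_simp

end Greedy

theorem WeakDual.exists_apply_lt_of_mem_closure_convexHull {E : Type*} [AddCommGroup E]
    [TopologicalSpace E] [Module ℝ E] {F : Set (WeakDual ℝ E)} {f : WeakDual ℝ E}
    (hf : f ∈ closure (convexHull ℝ F)) (z : E) {δ : ℝ} (hδ : 0 < δ) :
    ∃ g ∈ F, g z < f z + δ := by
  by_contra! h
  have hclosed : IsClosed {g : WeakDual ℝ E | f z + δ ≤ g z} :=
    isClosed_le continuous_const (WeakDual.eval_continuous z)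
  have hconvex : Convex ℝ {g : WeakDual ℝ E | f z + δ ≤ g z} :=
    convex_halfSpace_ge ⟨fun _ _ => rfl, fun _ _ => rfl⟩ _
  have : f z + δ ≤ f z := closure_minimal (convexHull_min h hconvex) hclosed hf
  linarith

theorem ContinuousLinearMap.tendsto_apply_of_dense {ι 𝕜 E F : Type*}
    [NontriviallyNormedField 𝕜] [SeminormedAddCommGroup E] [NormedSpace 𝕜 E]
    [NormedAddCommGroup F] [NormedSpace 𝕜 F] {l : Filter ι} {A : ι → E →L[𝕜] F} {C : ℝ≥0}
    (hA : ∀ i, ‖A i‖₊ ≤ C) {f : E → F} (hf : Continuous f) {s : Set E} (hs : Dense s)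
    (h : ∀ x ∈ s, Tendsto (fun i => A i x) l (𝓝 (f x))) (x : E) :
    Tendsto (fun i => A i x) l (𝓝 (f x)) := by
  have hequi : Equicontinuous fun i => ⇑(A i) :=
    (LipschitzWith.uniformEquicontinuous _ C fun i =>
      (A i).lipschitz.weaken (hA i)).equicontinuous
  exact (hequi.isClosed_setOfPred_tendsto hf).closure_subset_iff.2 h (hs.closure_eq ▸ trivial)

theorem norm_inv_natCast_smul_sum_range_le {V : Type*} [SeminormedAddCommGroup V]
    [NormedSpace ℝ V] {g : ℕ → V} {C : ℝ} (hC : 0 ≤ C) (hg : ∀ k, ‖g k‖ ≤ C) (N : ℕ) :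
    ‖(N : ℝ)⁻¹ • ∑ k ∈ range N, g k‖ ≤ C := by
  rcases Nat.eq_zero_or_pos N with rfl | hN
  · simpa using hC
  have hN' : (0 : ℝ) < N := by exact_mod_cast hN
  calc ‖(N : ℝ)⁻¹ • ∑ k ∈ range N, g k‖ ≤ (N : ℝ)⁻¹ * ∑ k ∈ range N, ‖g k‖ := by
        rw [norm_smul, norm_inv, RCLike.norm_natCast]
        gcongr
        exact norm_sum_le _ _
    _ ≤ (N : ℝ)⁻¹ * (N * C) := by
        gcongr
        simpa using sum_le_sum fun k (_ : k ∈ range N) => hg k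
    _ = C := by field_simp

theorem exists_smul_norm_le_geometric {E : Type*} [SeminormedAddCommGroup E] [NormedSpace ℝ E]
    (u : ℕ → E) : ∃ w : ℕ → ℝ, (∀ i, w i ≠ 0) ∧ ∀ i, ‖w i • u i‖ ≤ (1 / 2) ^ i := by
  refine ⟨fun i => (1 / 2) ^ i / (1 + ‖u i‖), fun i => by positivity, fun i => ?_⟩
  rw [norm_smul, Real.norm_of_nonneg (by positivity), div_mul_eq_mul_div,
    div_le_iff₀ (by positivity)]
  gcongr
  linarith

noncomputable section

variable {E : Type*} [NormedAddCommGroup E] [NormedSpace ℝ E] {a : ℕ → E}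

theorem memℓp_two_apply_of_norm_le_geometric (ha : ∀ i, ‖a i‖ ≤ (1 / 2) ^ i)
    (g : WeakDual ℝ E) : Memℓp (fun i => g (a i)) 2 := by
  refine memℓp_gen (Summable.of_nonneg_of_le (fun _ => by positivity) (fun i => ?_)
    ((summable_geometric_of_lt_one (by norm_num : (0:ℝ) ≤ 1 / 4) (by norm_num)).mul_left
      (‖WeakDual.toStrongDual g‖ ^ 2)))
  have : ‖g (a i)‖ ≤ ‖WeakDual.toStrongDual g‖ * (1 / 2) ^ i :=
    ((WeakDual.toStrongDual g).le_opNorm (a i)).trans (by gcongr; exact ha i)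
  calc ‖g (a i)‖ ^ (2 : ENNReal).toReal = ‖g (a i)‖ ^ 2 := by norm_num
    _ ≤ (‖WeakDual.toStrongDual g‖ * (1 / 2) ^ i) ^ 2 := by gcongr
    _ = ‖WeakDual.toStrongDual g‖ ^ 2 * (1 / 4) ^ i := by
      rw [mul_pow, ← pow_mul, mul_comm i, pow_mul]; norm_num

def analysisOp (ha : ∀ i, ‖a i‖ ≤ (1 / 2) ^ i) (g : WeakDual ℝ E) : ℓ²(ℕ, ℝ) :=
  ⟨fun i => g (a i), memℓp_two_apply_of_norm_le_geometric ha g⟩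

def synthesisOp (a : ℕ → E) (v : ℓ²(ℕ, ℝ)) : E := ∑' i, v i • a i

theorem norm_lp_apply_smul_le (ha : ∀ i, ‖a i‖ ≤ (1 / 2) ^ i) (v : ℓ²(ℕ, ℝ)) (i : ℕ) :
    ‖v i • a i‖ ≤ ‖v‖ * (1 / 2) ^ i := by
  rw [norm_smul]
  exact mul_le_mul (lp.norm_apply_le_norm two_ne_zero v i) (ha i) (norm_nonneg _) (norm_nonneg _)

theorem norm_synthesisOp_le (ha : ∀ i, ‖a i‖ ≤ (1 / 2) ^ i) (v : ℓ²(ℕ, ℝ)) :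
    ‖synthesisOp a v‖ ≤ 2 * ‖v‖ := by
  simpa [synthesisOp, mul_comm] using tsum_of_norm_bounded (hasSum_geometric_two.mul_left ‖v‖)
    (norm_lp_apply_smul_le ha v)

theorem synthesisOp_single (a : ℕ → E) (i : ℕ) (c : ℝ) :
    synthesisOp a (lp.single 2 i c) = c • a i := by
  rw [synthesisOp, tsum_eq_single i fun j hj => by simp [hj]]
  simp

theorem dense_range_synthesisOp {u : ℕ → E} (hu : DenseRange u) {w : ℕ → ℝ}
    (hw : ∀ i, w i ≠ 0) : Dense (Set.range (synthesisOp fun i => w i • u i)) := by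
  refine hu.mono ?_
  rintro _ ⟨i, rfl⟩
  exact ⟨lp.single 2 i (w i)⁻¹,
    by rw [synthesisOp_single, smul_smul, inv_mul_cancel₀ (hw i), one_smul]⟩

variable [CompleteSpace E]

theorem inner_analysisOp (ha : ∀ i, ‖a i‖ ≤ (1 / 2) ^ i) (v : ℓ²(ℕ, ℝ)) (g : WeakDual ℝ E) :
    inner ℝ v (analysisOp ha g) = g (synthesisOp a v) := by
  have hs : Summable fun i => v i • a i :=
    Summable.of_norm_bounded (summable_geometric_two.mul_left ‖v‖) (norm_lp_apply_smul_le ha v)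
  rw [lp.inner_eq_tsum, synthesisOp]
  exact (tsum_congr fun i => by simp [analysisOp, mul_comm]).trans
    ((WeakDual.toStrongDual g).map_tsum hs).symm

theorem norm_analysisOp_le (ha : ∀ i, ‖a i‖ ≤ (1 / 2) ^ i) (g : WeakDual ℝ E) :
    ‖analysisOp ha g‖ ≤ 2 * ‖WeakDual.toStrongDual g‖ := by
  have h : ‖analysisOp ha g‖ ^ 2 ≤ 2 * ‖WeakDual.toStrongDual g‖ * ‖analysisOp ha g‖ := by
    rw [← real_inner_self_eq_norm_sq, inner_analysisOp]
    calc g (synthesisOp a (analysisOp ha g))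
        ≤ ‖WeakDual.toStrongDual g‖ * ‖synthesisOp a (analysisOp ha g)‖ :=
          ((WeakDual.toStrongDual g).le_opNorm _).trans' (le_abs_self _)
      _ ≤ _ := by
          nlinarith [norm_synthesisOp_le ha (analysisOp ha g),
            norm_nonneg (WeakDual.toStrongDual g)]
  nlinarith [norm_nonneg (analysisOp ha g), norm_nonneg (WeakDual.toStrongDual g)]

theorem exists_seq_tendsto_cesaro_analysisOp (ha : ∀ i, ‖a i‖ ≤ (1 / 2) ^ i)
    {F : Set (WeakDual ℝ E)} {C : ℝ} (hF : ∀ g ∈ F, ‖WeakDual.toStrongDual g‖ ≤ C)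
    {f : WeakDual ℝ E} (hf : f ∈ closure (convexHull ℝ F)) :
    ∃ seq : ℕ → WeakDual ℝ E, (∀ n, seq n ∈ F) ∧
      Tendsto (fun N : ℕ => (N : ℝ)⁻¹ • ∑ k ∈ range N, analysisOp ha (seq k)) atTop
        (𝓝 (analysisOp ha f)) := by
  have hbdd : Bornology.IsBounded (analysisOp ha '' F) := by
    refine isBounded_iff_forall_norm_le.2 ⟨2 * C, ?_⟩
    rintro _ ⟨g, hg, rfl⟩
    exact (norm_analysisOp_le ha g).trans (by gcongr; exact hF g hg)
  have hinner : ∀ v : ℓ²(ℕ, ℝ), ∀ δ > 0, ∃ x ∈ analysisOp ha '' F,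
      inner ℝ v (x - analysisOp ha f) < δ := by
    intro v δ hδ
    obtain ⟨g, hg, hlt⟩ :=
      WeakDual.exists_apply_lt_of_mem_closure_convexHull hf (synthesisOp a v) hδ
    refine ⟨_, Set.mem_image_of_mem _ hg, ?_⟩
    rw [inner_sub_right, inner_analysisOp, inner_analysisOp]
    linarith
  obtain ⟨s, hsF, hs⟩ := exists_seq_tendsto_cesaro_of_forall_inner_lt hbdd hinner
  choose seq hseqF hseq using hsF
  exact ⟨seq, hseqF, by simpa only [hseq] using hs⟩

theorem tendsto_cesaro_apply_synthesisOp (ha : ∀ i, ‖a i‖ ≤ (1 / 2) ^ i)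
    {g : ℕ → WeakDual ℝ E} {f : WeakDual ℝ E}
    (h : Tendsto (fun N : ℕ => (N : ℝ)⁻¹ • ∑ k ∈ range N, analysisOp ha (g k)) atTop
      (𝓝 (analysisOp ha f))) (v : ℓ²(ℕ, ℝ)) :
    Tendsto (fun N : ℕ => (N : ℝ)⁻¹ * ∑ k ∈ range N, g k (synthesisOp a v)) atTop
      (𝓝 (f (synthesisOp a v))) := by
  simpa only [inner_smul_right, inner_sum, inner_analysisOp] using
    (tendsto_const_nhds (x := v)).inner (𝕜 := ℝ) h

end

/-- Let `E` be a separable real Banach space, `F` a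
(norm-)bounded subset of the dual `E*` and `f` a point of the weak* closure
of the convex hull of `F` (here the dual is carried by `WeakDual ℝ E`, whose
topology is the weak* topology).  Then there is a sequence `(f_n)` in `F`
whose arithmetic means converge to `f` in the weak* topology, i.e. pointwise
on `E`. -/
theorem stmt9 {E : Type*} [NormedAddCommGroup E] [NormedSpace ℝ E] [CompleteSpace E]
    [TopologicalSpace.SeparableSpace E]
    (F : Set (WeakDual ℝ E)) (hFbdd : ∃ R : ℝ, ∀ g ∈ F, ∀ x : E, |g x| ≤ R * ‖x‖)
    (f : WeakDual ℝ E) (hf : f ∈ closure (convexHull ℝ F)) :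
    ∃ seq : ℕ → WeakDual ℝ E, (∀ n, seq n ∈ F) ∧
      ∀ x : E,
        Tendsto (fun N : ℕ => (N : ℝ)⁻¹ * ∑ k ∈ Finset.range N, seq k x)
          atTop (nhds (f x)) := by
  obtain ⟨R, hR⟩ := hFbdd
  have hnorm : ∀ g ∈ F, ‖WeakDual.toStrongDual g‖ ≤ R.toNNReal :=
    fun g hg => (WeakDual.toStrongDual g).opNorm_le_bound (by positivity) fun x =>
      (hR g hg x).trans (by gcongr; exact R.le_coe_toNNReal)
  have : Nonempty E := ⟨0⟩
  obtain ⟨w, hw0, ha⟩ := exists_smul_norm_le_geometric (TopologicalSpace.denseSeq E)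
  obtain ⟨seq, hseqF, hs⟩ := exists_seq_tendsto_cesaro_analysisOp ha hnorm hf
  refine ⟨seq, hseqF, fun x => ?_⟩
  have hmean : ∀ N : ℕ,
      ‖(N : ℝ)⁻¹ • ∑ k ∈ range N, WeakDual.toStrongDual (seq k)‖₊ ≤ R.toNNReal := fun N =>
    norm_inv_natCast_smul_sum_range_le (by positivity) (fun k => hnorm _ (hseqF k)) N
  have hdense : ∀ y ∈ Set.range (synthesisOp fun i => w i • TopologicalSpace.denseSeq E i),
      Tendsto (fun N : ℕ => (N : ℝ)⁻¹ * ∑ k ∈ range N, seq k y) atTop (𝓝 (f y)) := by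
    rintro _ ⟨v, rfl⟩
    exact tendsto_cesaro_apply_synthesisOp ha hs v
  simpa using ContinuousLinearMap.tendsto_apply_of_dense (l := atTop) hmean
    (WeakDual.toStrongDual f).continuous
    (dense_range_synthesisOp (TopologicalSpace.denseRange_denseSeq E) hw0) (by simpa using hdense) x
end

section
/- Let K be a compact Hausdorff space, let μ be a finite signed regular Borel measure on K with ‖μ‖ = |μ|(K) = 1, and let h : K → ℝ be a Borel function with |h(x)| = 1 for all x ∈ K such that dμ = h d|μ| (i.e. μ(B) = ∫_B h d|μ| for every Borel set B). Assume that (x_n)_{n≥1} is a sequence in K which is uniformly distributed with respect to |μ| (i.e. (1/N)·Σ_{k=1}^N g(x_k) → ∫_K g d|μ| for every continuous g : K → ℝ) and that h is |μ|-Riemann integrable, i.e. the set of discontinuity points of h has |μ|-measure zero. Then, setting ε_n = h(x_n), for every continuous function f : K → ℝ one has (1/N)·Σ_{k=1}^N ε_k·f(x_k) → ∫_K f dμ as N → ∞. -/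
/-!
With `P = {h = 1}`, the Jordan decomposition of `μ` is `(|μ|↾P, |μ|↾Pᶜ)`, so
`∫ f dμ⁺ - ∫ f dμ⁻ = ∫ h f d|μ|`, and `ε_k f (x_k) = (h f) (x_k)`. It therefore suffices to extend
the equidistribution limit from continuous functions to the bounded, `|μ|`-a.e. continuous
function `φ = h f`. By outer regularity the discontinuity set of `φ` lies in an open set `U` of
small measure, and a partition of unity gives a continuous `g` with `φ ≤ g ≤ φ + δ` off `U` and
`φ ≤ g ≤ φ + δ + 2M` on `U`; such upper (and, applied to `-φ`, lower) continuous bounds with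
integrals close to `∫ φ` squeeze the averages of `φ`.
-/

open Filter Finset MeasureTheory Set Topology

theorem exists_continuous_ge_le_add_indicator {X : Type*} [TopologicalSpace X] [NormalSpace X]
    [ParacompactSpace X] {φ : X → ℝ} {M δ : ℝ} (hM : ∀ x, |φ x| ≤ M) (hδ : 0 < δ)
    {U : Set X} (hU : IsOpen U) (hdisc : {x | ¬ContinuousAt φ x} ⊆ U) :
    ∃ g : C(X, ℝ), ∀ x, φ x ≤ g x ∧ g x ≤ φ x + δ + U.indicator (fun _ ↦ 2 * M) x := by
  refine exists_continuous_forall_mem_convex_of_local_const (fun _ ↦ convex_Icc _ _) fun x ↦ ?_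
  by_cases hx : x ∈ U
  · refine ⟨M, eventually_of_mem (hU.mem_nhds hx) fun y hy ↦ ⟨(le_abs_self _).trans (hM y), ?_⟩⟩
    rw [indicator_of_mem hy]
    linarith [neg_abs_le (φ y), hM y]
  · have hφx : ContinuousAt φ x := by_contra fun h ↦ hx (hdisc h)
    have hM0 : 0 ≤ M := (abs_nonneg _).trans (hM x)
    refine ⟨φ x + δ / 2, (hφx.eventually (Metric.ball_mem_nhds _ (half_pos hδ))).mono
      fun y hy ↦ ?_⟩
    rw [Real.dist_eq, abs_sub_lt_iff] at hy
    have : 0 ≤ U.indicator (fun _ ↦ 2 * M) y := indicator_nonneg (fun _ _ ↦ by positivity) _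
    constructor <;> linarith

theorem exists_continuous_ge_integral_le_add {X : Type*} [TopologicalSpace X] [NormalSpace X]
    [ParacompactSpace X] [MeasurableSpace X] [OpensMeasurableSpace X]
    (ν : Measure X) [IsFiniteMeasure ν] [ν.OuterRegular] {φ : X → ℝ} (hφ : Integrable φ ν)
    {M : ℝ} (hM : ∀ x, |φ x| ≤ M) (hdisc : ν {x | ¬ContinuousAt φ x} = 0) {ε : ℝ}
    (hε : 0 < ε) :
    ∃ g : C(X, ℝ), (∀ x, φ x ≤ g x) ∧ ∫ x, g x ∂ν ≤ ∫ x, φ x ∂ν + ε := by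
  set η := ε / (2 * (2 * |M| + 1))
  obtain ⟨U, hdiscU, hU, hνU⟩ := Set.exists_isOpen_lt_of_lt (μ := ν) {x | ¬ContinuousAt φ x}
    (ENNReal.ofReal η) (by rw [hdisc]; exact ENNReal.ofReal_pos.2 (by positivity))
  set δ := ε / (2 * (ν.real univ + 1))
  obtain ⟨g, hg⟩ := exists_continuous_ge_le_add_indicator hM (δ := δ) (by positivity) hU hdiscU
  have hind : Integrable (U.indicator fun _ ↦ 2 * M) ν :=
    (integrable_const _).indicator hU.measurableSet
  have hbound : Integrable (fun x ↦ φ x + δ + U.indicator (fun _ ↦ 2 * M) x) ν :=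
    (hφ.add (integrable_const δ)).add hind
  have hgint : Integrable g ν := by
    refine Integrable.mono' (hbound.norm.add hφ.norm) g.continuous.aestronglyMeasurable
      (ae_of_all _ fun x ↦ ?_)
    obtain ⟨hlo, hhi⟩ := hg x
    set b := φ x + δ + U.indicator (fun _ ↦ 2 * M) x
    show |g x| ≤ |b| + |φ x|
    rw [abs_le]
    constructor <;> linarith [le_abs_self b, neg_abs_le (φ x), abs_nonneg (φ x), abs_nonneg b]
  refine ⟨g, fun x ↦ (hg x).1, ?_⟩
  have hνU' : ν.real U ≤ η := ENNReal.toReal_le_of_le_ofReal (by positivity) hνU.le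
  calc ∫ x, g x ∂ν ≤ ∫ x, φ x + δ + U.indicator (fun _ ↦ 2 * M) x ∂ν :=
        integral_mono hgint hbound fun x ↦ (hg x).2
    _ = ∫ x, φ x ∂ν + δ * ν.real univ + 2 * M * ν.real U := by
        rw [integral_add (f := fun x ↦ φ x + δ) (hφ.add (integrable_const δ)) hind,
          integral_add hφ (integrable_const δ), integral_const,
          integral_indicator_const _ hU.measurableSet, smul_eq_mul, smul_eq_mul]
        ring
    _ ≤ ∫ x, φ x ∂ν + ε := by
        have hδ : δ * (2 * (ν.real univ + 1)) = ε := div_mul_cancel₀ _ (by positivity)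
        have hη : η * (2 * (2 * |M| + 1)) = ε := div_mul_cancel₀ _ (by positivity)
        have hMU : 2 * M * ν.real U ≤ 2 * |M| * η :=
          mul_le_mul (by gcongr; exact le_abs_self M) hνU' measureReal_nonneg (by positivity)
        have : 0 ≤ δ := by positivity
        have : 0 ≤ η := by positivity
        nlinarith [measureReal_nonneg (μ := ν) (s := univ)]

def IsEquidistributed {X : Type*} [TopologicalSpace X] [MeasurableSpace X] (x : ℕ → X)
    (ν : Measure X) : Prop :=
  ∀ g : X → ℝ, Continuous g →
    Tendsto (fun N : ℕ ↦ (N : ℝ)⁻¹ * ∑ k ∈ range N, g (x k)) atTop (𝓝 (∫ a, g a ∂ν))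

namespace IsEquidistributed

variable {X : Type*} [TopologicalSpace X] [NormalSpace X] [ParacompactSpace X]
  [MeasurableSpace X] [OpensMeasurableSpace X] {ν : Measure X} [IsFiniteMeasure ν]
  [ν.OuterRegular] {x : ℕ → X} {φ : X → ℝ} {M : ℝ}

theorem eventually_average_lt (hx : IsEquidistributed x ν) (hφ : Integrable φ ν)
    (hM : ∀ a, |φ a| ≤ M) (hdisc : ν {a | ¬ContinuousAt φ a} = 0) {b : ℝ}
    (hb : ∫ a, φ a ∂ν < b) :
    ∀ᶠ N : ℕ in atTop, (N : ℝ)⁻¹ * ∑ k ∈ range N, φ (x k) < b := by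
  obtain ⟨g, hφg, hg⟩ :=
    exists_continuous_ge_integral_le_add ν hφ hM hdisc (half_pos (sub_pos.2 hb))
  refine ((hx g g.continuous).eventually_lt_const (by linarith)).mono
    fun N hN ↦ lt_of_le_of_lt ?_ hN
  gcongr with k
  exact hφg _

theorem tendsto_average (hx : IsEquidistributed x ν) (hφ : Integrable φ ν)
    (hM : ∀ a, |φ a| ≤ M) (hdisc : ν {a | ¬ContinuousAt φ a} = 0) :
    Tendsto (fun N : ℕ ↦ (N : ℝ)⁻¹ * ∑ k ∈ range N, φ (x k)) atTop (𝓝 (∫ a, φ a ∂ν)) := by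
  refine tendsto_order.2 ⟨fun b hb ↦ ?_, fun b hb ↦ hx.eventually_average_lt hφ hM hdisc hb⟩
  have hdisc' : ν {a | ¬ContinuousAt (-φ) a} = 0 := by simpa [continuousAt_neg_iff] using hdisc
  filter_upwards [hx.eventually_average_lt hφ.neg (fun a ↦ (abs_neg (φ a)).trans_le (hM a))
    hdisc' (b := -b) (by rw [Pi.neg_def, integral_neg]; linarith)] with N hN
  simp only [Pi.neg_apply, sum_neg_distrib, mul_neg] at hN
  linarith

end IsEquidistributed

theorem mul_eq_indicator_sub_indicator_compl {X : Type*} {h g : X → ℝ}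
    (habs : ∀ a, |h a| = 1) :
    (fun a ↦ h a * g a) = (h ⁻¹' {1}).indicator g - (h ⁻¹' {1})ᶜ.indicator g := by
  ext a
  by_cases ha : a ∈ h ⁻¹' {1}
  · have h1 : h a = 1 := ha
    rw [Pi.sub_apply, indicator_of_mem ha, indicator_of_notMem (notMem_compl_iff.2 ha), h1]
    ring
  · have h1 : h a = -1 := ((abs_eq zero_le_one).1 (habs a)).resolve_left ha
    rw [Pi.sub_apply, indicator_of_notMem ha, indicator_of_mem (mem_compl ha), h1]
    ring

section

variable {X : Type*} [MeasurableSpace X]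

theorem integral_mul_of_abs_eq_one {ν : Measure X} {h g : X → ℝ} (hh : Measurable h)
    (habs : ∀ a, |h a| = 1) (hg : Integrable g ν) :
    ∫ a, h a * g a ∂ν = ∫ a in h ⁻¹' {1}, g a ∂ν - ∫ a in (h ⁻¹' {1})ᶜ, g a ∂ν := by
  have hP : MeasurableSet (h ⁻¹' {1}) := hh (measurableSet_singleton 1)
  rw [mul_eq_indicator_sub_indicator_compl habs, Pi.sub_def, integral_sub (hg.indicator hP)
    (hg.indicator hP.compl), integral_indicator hP, integral_indicator hP.compl]

namespace MeasureTheory.JordanDecomposition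

@[simps]
noncomputable def restrictCompl (ν : Measure X) [IsFiniteMeasure ν] {s : Set X}
    (hs : MeasurableSet s) : JordanDecomposition X where
  posPart := ν.restrict s
  negPart := ν.restrict sᶜ
  mutuallySingular := ⟨sᶜ, hs.compl, by simp [Measure.restrict_apply hs.compl],
    by simp [Measure.restrict_apply hs]⟩

end MeasureTheory.JordanDecomposition

namespace MeasureTheory.SignedMeasure

variable {μ : SignedMeasure X} {ν : Measure X} [IsFiniteMeasure ν] {h : X → ℝ}

theorem toJordanDecomposition_eq_restrictCompl (hh : Measurable h) (habs : ∀ a, |h a| = 1)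
    (hrep : ∀ B, MeasurableSet B → μ B = ∫ a in B, h a ∂ν) :
    μ.toJordanDecomposition =
      JordanDecomposition.restrictCompl ν (hh (measurableSet_singleton 1)) := by
  rw [← JordanDecomposition.toJordanDecomposition_toSignedMeasure
    (JordanDecomposition.restrictCompl ν _)]
  congr 1
  ext B hB
  have := integral_mul_of_abs_eq_one (ν := ν.restrict B) (g := fun _ ↦ 1) hh habs
    (integrable_const 1)
  simp only [mul_one] at this
  rw [hrep B hB, this, JordanDecomposition.toSignedMeasure, sub_apply,
    Measure.toSignedMeasure_apply_measurable hB, Measure.toSignedMeasure_apply_measurable hB]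
  simp only [JordanDecomposition.restrictCompl_posPart, JordanDecomposition.restrictCompl_negPart,
    setIntegral_const, smul_eq_mul, mul_one, measureReal_restrict_apply hB,
    measureReal_restrict_apply' hB, inter_comm]

theorem integral_posPart_sub_integral_negPart (hh : Measurable h) (habs : ∀ a, |h a| = 1)
    (hrep : ∀ B, MeasurableSet B → μ B = ∫ a in B, h a ∂ν) {f : X → ℝ} (hf : Integrable f ν) :
    ∫ a, f a ∂μ.toJordanDecomposition.posPart - ∫ a, f a ∂μ.toJordanDecomposition.negPart =
      ∫ a, h a * f a ∂ν := by
  rw [toJordanDecomposition_eq_restrictCompl hh habs hrep, integral_mul_of_abs_eq_one hh habs hf]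
  rfl

end MeasureTheory.SignedMeasure

end

theorem stmt14_general {K : Type*} [TopologicalSpace K] [CompactSpace K] [T2Space K]
    [MeasurableSpace K] [BorelSpace K]
    (μ : SignedMeasure K) (hreg : μ.totalVariation.Regular)
    (h : K → ℝ) (hmeas : Measurable h) (habs : ∀ x, |h x| = 1)
    (hrep : ∀ B : Set K, MeasurableSet B → μ B = ∫ x in B, h x ∂μ.totalVariation)
    (x : ℕ → K)
    (hud : ∀ g : K → ℝ, Continuous g →
      Tendsto (fun N : ℕ => (N : ℝ)⁻¹ * ∑ k ∈ Finset.range N, g (x k))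
        atTop (nhds (∫ a, g a ∂μ.totalVariation)))
    (hRiemann : μ.totalVariation {a | ¬ ContinuousAt h a} = 0) :
    ∀ f : K → ℝ, Continuous f →
      Tendsto (fun N : ℕ => (N : ℝ)⁻¹ * ∑ k ∈ Finset.range N, h (x k) * f (x k))
        atTop
        (nhds ((∫ a, f a ∂μ.toJordanDecomposition.posPart)
          - ∫ a, f a ∂μ.toJordanDecomposition.negPart)) := by
  intro f hf
  have : μ.totalVariation.OuterRegular := hreg.toOuterRegular
  obtain ⟨M, hM⟩ := isCompact_univ.exists_bound_of_continuousOn hf.continuousOn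
  have hfint : Integrable f μ.totalVariation :=
    hf.integrable_of_hasCompactSupport (HasCompactSupport.of_compactSpace f)
  have hφ : Integrable (fun a ↦ h a * f a) μ.totalVariation :=
    hfint.bdd_mul hmeas.aestronglyMeasurable (ae_of_all _ fun a ↦ (habs a).le)
  have hbound : ∀ a, |h a * f a| ≤ M := fun a ↦ by
    rw [abs_mul, habs, one_mul]
    exact hM a (mem_univ a)
  have hdisc_subset : {a | ¬ContinuousAt (fun a ↦ h a * f a) a} ⊆ {a | ¬ContinuousAt h a} :=
    fun a ha hc ↦ ha (hc.mul hf.continuousAt)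
  rw [SignedMeasure.integral_posPart_sub_integral_negPart hmeas habs hrep hfint]
  exact IsEquidistributed.tendsto_average (φ := fun a ↦ h a * f a) hud hφ hbound
    (measure_mono_null hdisc_subset hRiemann)

/-- Let `K` be compact Hausdorff, `μ` a finite signed
regular Borel measure with `|μ|(K) = 1`, and `h : K → ℝ` a Borel function of
modulus one with `dμ = h d|μ|`.  If `(x_n)` is uniformly distributed with
respect to `|μ|` and `h` is `|μ|`-Riemann integrable (its discontinuity set
is `|μ|`-null), then with `ε_n = h (x_n)` one has
`(1/N)·∑_{k<N} ε_k f (x_k) → ∫ f dμ` for every continuous `f : K → ℝ`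
(where `∫ f dμ = ∫ f dμ⁺ - ∫ f dμ⁻`). -/
theorem stmt14 {K : Type*} [TopologicalSpace K] [CompactSpace K] [T2Space K]
    [MeasurableSpace K] [BorelSpace K]
    (μ : SignedMeasure K) (hreg : μ.totalVariation.Regular)
    (hnorm : μ.totalVariation Set.univ = 1)
    (h : K → ℝ) (hmeas : Measurable h) (habs : ∀ x, |h x| = 1)
    (hrep : ∀ B : Set K, MeasurableSet B → μ B = ∫ x in B, h x ∂μ.totalVariation)
    (x : ℕ → K)
    (hud : ∀ g : K → ℝ, Continuous g →
      Tendsto (fun N : ℕ => (N : ℝ)⁻¹ * ∑ k ∈ Finset.range N, g (x k))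
        atTop (nhds (∫ a, g a ∂μ.totalVariation)))
    (hRiemann : μ.totalVariation {a | ¬ ContinuousAt h a} = 0) :
    ∀ f : K → ℝ, Continuous f →
      Tendsto (fun N : ℕ => (N : ℝ)⁻¹ * ∑ k ∈ Finset.range N, h (x k) * f (x k))
        atTop
        (nhds ((∫ a, f a ∂μ.toJordanDecomposition.posPart)
          - ∫ a, f a ∂μ.toJordanDecomposition.negPart)) :=
  stmt14_general μ hreg h hmeas habs hrep x hud hRiemann
end

section
/- Let a < b be real numbers and let φ : [a,b] → ℝ be a function of bounded variation which is right continuous, with φ(a) = 0 and total variation V_a^b φ = 1. Let v(x) = V_a^x φ be the total variation function of φ, and let p = (v + φ)/2 and n = (v − φ)/2 be the positive and negative variation functions of φ. Then there exist a sequence (x_k)_{k≥1} of points of [a,b] and a sequence of signs (ε_k)_{k≥1} with each ε_k ∈ {−1, +1} such that for every point x ∈ [a,b] at which φ is continuous: (a) (1/N)·Σ_{k=1}^N χ_{[a,x)}(x_k) → v(x); (b) (1/N)·Σ_{k=1}^N ε_k·χ_{[a,x)}(x_k) → φ(x); (c) (1/(2N))·Σ_{k=1}^N (1+ε_k)·χ_{[a,x)}(x_k)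 → p(x); and (d) (1/(2N))·Σ_{k=1}^N (1−ε_k)·χ_{[a,x)}(x_k) → n(x), as N → ∞. -/
/-!
Write `p = (v + φ) / 2` and `n = (v - φ) / 2`: both are nondecreasing on `[a, b]`, vanish at `a`,
and `p b + n b = v b = 1`. Feed a uniformly distributed sequence `u_k` in `[0, 1)` (van der
Corput's, whose discrepancy is `O(log N)`) through generalized inverses: if `u_k < p b`, let `x_k`
be the quantile of `p` at `u_k` and `ε_k = 1`, otherwise the quantile of `p b + n` at `u_k` and
`ε_k = -1`. Where `φ` is continuous, `v`, `p` and `n` are left continuous, so `x_k < x` holds exactly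
when `u_k ∈ [0, p x)`, resp. `u_k ∈ [p b, p b + n x)`, up to the right endpoint, which at most one
`u_k` hits. Uniform distribution then gives the limits `p x` and `n x` in (c) and (d), and (a), (b)
are their sum and difference.
-/

open Filter Finset Topology

/-- The binary digits of `k`, mirrored across the binary point. -/
noncomputable def vanDerCorput : ℕ → ℝ
  | 0 => 0
  | k + 1 => (((k + 1) % 2 : ℕ) + vanDerCorput ((k + 1) / 2)) / 2
decreasing_by omega

lemma vanDerCorput_eq (k : ℕ) : vanDerCorput k = ((k % 2 : ℕ) + vanDerCorput (k / 2)) / 2 := by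
  cases k with
  | zero => simp [vanDerCorput]
  | succ k => rw [vanDerCorput]

@[simp] lemma vanDerCorput_zero : vanDerCorput 0 = 0 := by simp [vanDerCorput]

lemma vanDerCorput_two_mul (k : ℕ) : vanDerCorput (2 * k) = vanDerCorput k / 2 := by
  rw [vanDerCorput_eq]
  simp

lemma vanDerCorput_two_mul_add_one (k : ℕ) :
    vanDerCorput (2 * k + 1) = (1 + vanDerCorput k) / 2 := by
  rw [vanDerCorput_eq]
  simp [Nat.add_mod, show (2 * k + 1) / 2 = k by omega]

lemma vanDerCorput_mem_Ico (k : ℕ) : vanDerCorput k ∈ Set.Ico 0 1 := by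
  induction k using Nat.evenOddRec with
  | h0 => simp
  | h_even k ih => rw [vanDerCorput_two_mul]; constructor <;> linarith [ih.1, ih.2]
  | h_odd k ih => rw [vanDerCorput_two_mul_add_one]; constructor <;> linarith [ih.1, ih.2]

lemma vanDerCorput_nonneg (k : ℕ) : 0 ≤ vanDerCorput k := (vanDerCorput_mem_Ico k).1

lemma vanDerCorput_lt_one (k : ℕ) : vanDerCorput k < 1 := (vanDerCorput_mem_Ico k).2

lemma vanDerCorput_eq_zero_iff {k : ℕ} : vanDerCorput k = 0 ↔ k = 0 := by
  refine ⟨fun h => ?_, fun h => h ▸ vanDerCorput_zero⟩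
  induction k using Nat.evenOddRec with
  | h0 => rfl
  | h_even k ih => rw [vanDerCorput_two_mul] at h; rw [ih (by linarith)]
  | h_odd k ih => rw [vanDerCorput_two_mul_add_one] at h; linarith [vanDerCorput_nonneg k]

lemma vanDerCorput_injective : Function.Injective vanDerCorput := by
  intro m
  induction m using Nat.evenOddRec with
  | h0 => exact fun n h => (vanDerCorput_eq_zero_iff.1 (h.symm.trans vanDerCorput_zero)).symm
  | h_even m ih =>
    intro n h
    obtain ⟨n, rfl | rfl⟩ := Nat.even_or_odd' n
    · rw [vanDerCorput_two_mul, vanDerCorput_two_mul] at h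
      rw [ih (by linarith)]
    · rw [vanDerCorput_two_mul, vanDerCorput_two_mul_add_one] at h
      linarith [vanDerCorput_lt_one m, vanDerCorput_nonneg n]
  | h_odd m ih =>
    intro n h
    obtain ⟨n, rfl | rfl⟩ := Nat.even_or_odd' n
    · rw [vanDerCorput_two_mul_add_one, vanDerCorput_two_mul] at h
      linarith [vanDerCorput_lt_one n, vanDerCorput_nonneg m]
    · rw [vanDerCorput_two_mul_add_one, vanDerCorput_two_mul_add_one] at h
      rw [ih (by linarith)]

lemma range_eq_image_two_mul_union (N : ℕ) :
    range N = (range ((N + 1) / 2)).image (2 * ·) ∪ (range (N / 2)).image (2 * · + 1) := by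
  ext k
  simp only [mem_range, mem_union, mem_image]
  constructor
  · intro hk
    obtain ⟨j, rfl | rfl⟩ := Nat.even_or_odd' k
    · exact Or.inl ⟨j, by omega, rfl⟩
    · exact Or.inr ⟨j, by omega, rfl⟩
  · rintro (⟨j, hj, rfl⟩ | ⟨j, hj, rfl⟩) <;> omega

lemma card_vanDerCorput_lt (N : ℕ) (c : ℝ) :
    #{k ∈ range N | vanDerCorput k < c} =
      #{k ∈ range ((N + 1) / 2) | vanDerCorput k < 2 * c} +
        #{k ∈ range (N / 2) | vanDerCorput k < 2 * c - 1} := by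
  rw [range_eq_image_two_mul_union, filter_union, card_union_of_disjoint, filter_image,
    filter_image, card_image_of_injective _ (fun _ _ h => by simpa using h),
    card_image_of_injective _ (fun _ _ h => by simpa using h)]
  · congr 2 <;> refine filter_congr fun k _ => ?_
    · rw [vanDerCorput_two_mul]
      constructor <;> intro <;> linarith
    · rw [vanDerCorput_two_mul_add_one]
      constructor <;> intro <;> linarith
  · refine disjoint_filter_filter (disjoint_left.2 ?_)
    simp only [mem_image, not_exists, not_and]
    rintro _ ⟨i, -, rfl⟩ j - h
    omega

/-- The discrepancy bound: each halving step of `card_vanDerCorput_lt` costs at most `1 / 2`. -/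
lemma abs_card_vanDerCorput_lt_sub_le (N : ℕ) {c : ℝ} (hc : c ∈ Set.Icc 0 1) :
    |(#{k ∈ range N | vanDerCorput k < c} : ℝ) - N * c| ≤ Nat.clog 2 N + 1 := by
  induction N using Nat.strong_induction_on generalizing c with
  | _ N ih =>
  rcases lt_or_ge N 2 with hN | hN
  · have hN1 : (N : ℝ) ≤ 1 := by exact_mod_cast Nat.le_of_lt_succ hN
    have hcard : (#{k ∈ range N | vanDerCorput k < c} : ℝ) ≤ N := by
      exact_mod_cast (card_filter_le _ _).trans (card_range N).le
    rw [abs_le]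
    constructor <;> nlinarith [hc.1, hc.2, (Nat.cast_nonneg _ : (0 : ℝ) ≤ N),
      (Nat.cast_nonneg _ : (0 : ℝ) ≤ #{k ∈ range N | vanDerCorput k < c}),
      (Nat.cast_nonneg _ : (0 : ℝ) ≤ Nat.clog 2 N)]
  have hclog : Nat.clog 2 N = Nat.clog 2 ((N + 1) / 2) + 1 := Nat.clog_of_two_le one_lt_two hN
  have hhalf : ((N + 1) / 2 : ℕ) + (N / 2 : ℕ) = (N : ℝ) := by exact_mod_cast (by omega)
  have hdiff : ((N + 1) / 2 : ℕ) ≤ (N / 2 : ℕ) + (1 : ℝ) := by exact_mod_cast (by omega)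
  have hle : ((N / 2 : ℕ) : ℝ) ≤ ((N + 1) / 2 : ℕ) := by exact_mod_cast (by omega)
  rw [card_vanDerCorput_lt, hclog]
  push_cast
  rcases le_or_gt c 2⁻¹ with hc2 | hc2
  · have hnone : #{k ∈ range (N / 2) | vanDerCorput k < 2 * c - 1} = 0 :=
      card_eq_zero.2 (filter_false_of_mem fun k _ => by linarith [vanDerCorput_nonneg k])
    have hih := abs_le.1 (ih ((N + 1) / 2) (by omega) (c := 2 * c) ⟨by linarith [hc.1], by linarith⟩)
    rw [hnone, abs_le]
    push_cast
    constructor <;> nlinarith [hc.1]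
  · have hall : #{k ∈ range ((N + 1) / 2) | vanDerCorput k < 2 * c} = (N + 1) / 2 := by
      rw [filter_true_of_mem fun k _ => by linarith [vanDerCorput_lt_one k], card_range]
    have hih := abs_le.1 (ih (N / 2) (by omega) (c := 2 * c - 1) ⟨by linarith, by linarith [hc.2]⟩)
    have hclog_le : (Nat.clog 2 (N / 2) : ℝ) ≤ Nat.clog 2 ((N + 1) / 2) := by
      exact_mod_cast Nat.clog_mono_right 2 (show N / 2 ≤ (N + 1) / 2 by omega)
    rw [hall, abs_le]
    constructor <;> nlinarith [hc.2]

lemma tendsto_clog_two_add_one_div :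
    Tendsto (fun N : ℕ => ((Nat.clog 2 N : ℝ) + 1) / N) atTop (𝓝 0) := by
  have hlogb : Tendsto (fun N : ℕ => (Real.logb 2 N + 2) / N) atTop (𝓝 0) := by
    have := ((Real.tendsto_pow_logb_div_mul_add_atTop (b := 2) 1 0 1 one_ne_zero).comp
      tendsto_natCast_atTop_atTop).add (tendsto_const_div_atTop_nhds_zero_nat (2 : ℝ))
    simpa [add_div] using this
  refine squeeze_zero' (Eventually.of_forall fun N => by positivity) ?_ hlogb
  filter_upwards [eventually_ge_atTop 1] with N hN
  refine div_le_div_of_nonneg_right ?_ N.cast_nonneg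
  have := Nat.ceil_lt_add_one (Real.logb_nonneg one_lt_two (by exact_mod_cast hN : (1 : ℝ) ≤ N))
  rw [← Nat.cast_ofNat, Real.natCeil_logb_natCast, Nat.cast_ofNat] at this
  linarith

def IsUniformlyDistributed (u : ℕ → ℝ) : Prop :=
  ∀ c ∈ Set.Icc (0 : ℝ) 1, Tendsto (fun N : ℕ => (#{k ∈ range N | u k < c} : ℝ) / N) atTop (𝓝 c)

theorem isUniformlyDistributed_vanDerCorput : IsUniformlyDistributed vanDerCorput := by
  intro c hc
  rw [tendsto_iff_norm_sub_tendsto_zero]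
  refine squeeze_zero' (Eventually.of_forall fun N => norm_nonneg _) ?_
    tendsto_clog_two_add_one_div
  filter_upwards [eventually_ge_atTop 1] with N hN
  have hN : (0 : ℝ) < N := by exact_mod_cast hN
  rw [Real.norm_eq_abs, div_sub' hN.ne', abs_div, abs_of_pos hN]
  exact div_le_div_of_nonneg_right (abs_card_vanDerCorput_lt_sub_le N hc) hN.le

lemma tendsto_card_div_of_Ico_subset_of_subset_Icc {u : ℕ → ℝ} (hu : Function.Injective u)
    {c₀ c L₀ L : ℝ} (hc : c₀ ≤ c)
    (h₀ : Tendsto (fun N : ℕ => (#{k ∈ range N | u k < c₀} : ℝ) / N) atTop (𝓝 L₀))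
    (h : Tendsto (fun N : ℕ => (#{k ∈ range N | u k < c} : ℝ) / N) atTop (𝓝 L))
    {P : ℕ → Prop} [DecidablePred P] (hlo : ∀ k, u k ∈ Set.Ico c₀ c → P k)
    (hhi : ∀ k, P k → u k ∈ Set.Icc c₀ c) :
    Tendsto (fun N : ℕ => (#{k ∈ range N | P k} : ℝ) / N) atTop (𝓝 (L - L₀)) := by
  have hsplit (N : ℕ) : #{k ∈ range N | u k < c₀} + #{k ∈ range N | u k ∈ Set.Ico c₀ c} =
      #{k ∈ range N | u k < c} := by
    rw [← card_union_of_disjoint (disjoint_filter.2 fun k _ h h' => not_le.2 h h'.1), ← filter_or]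
    refine congrArg card (filter_congr fun k _ => ?_)
    rw [Set.mem_Ico]
    constructor
    · rintro (h | h) <;> [linarith; exact h.2]
    · intro h
      by_cases h' : u k < c₀
      exacts [Or.inl h', Or.inr ⟨not_lt.1 h', h⟩]
  have hIco : Tendsto (fun N : ℕ => (#{k ∈ range N | u k ∈ Set.Ico c₀ c} : ℝ) / N) atTop
      (𝓝 (L - L₀)) :=
    (h.sub h₀).congr fun N => by rw [← hsplit N, Nat.cast_add, add_div, add_sub_cancel_left]
  have hlow (N : ℕ) : #{k ∈ range N | u k ∈ Set.Ico c₀ c} ≤ #{k ∈ range N | P k} :=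
    card_le_card (monotone_filter_right _ fun k _ hk => hlo k hk)
  have hhigh (N : ℕ) : #{k ∈ range N | P k} ≤ #{k ∈ range N | u k ∈ Set.Ico c₀ c} + 1 := by
    have hsub : {k ∈ range N | P k} ⊆
        {k ∈ range N | u k ∈ Set.Ico c₀ c} ∪ {k ∈ range N | u k = c} := by
      intro k hk
      simp only [mem_union, mem_filter] at hk ⊢
      rcases (hhi k hk.2).2.lt_or_eq with h | h
      exacts [Or.inl ⟨hk.1, (hhi k hk.2).1, h⟩, Or.inr ⟨hk.1, h⟩]
    have hone : #{k ∈ range N | u k = c} ≤ 1 :=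
      card_le_one.2 fun i hi j hj => hu ((mem_filter.1 hi).2.trans (mem_filter.1 hj).2.symm)
    exact (card_le_card hsub).trans ((card_union_le _ _).trans (Nat.add_le_add_left hone _))
  refine tendsto_of_tendsto_of_tendsto_of_le_of_le hIco
    (by simpa only [add_zero] using hIco.add tendsto_one_div_atTop_nhds_zero_nat)
    (fun N => div_le_div_of_nonneg_right (Nat.cast_le.2 (hlow N)) N.cast_nonneg) (fun N => ?_)
  rw [← add_div, ← Nat.cast_add_one]
  exact div_le_div_of_nonneg_right (Nat.cast_le.2 (hhigh N)) N.cast_nonneg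

/-- Only meaningful when `u ≤ F b`: otherwise the set is empty and `sInf ∅ = 0`. -/
noncomputable def quantile (F : ℝ → ℝ) (a b u : ℝ) : ℝ := sInf {t ∈ Set.Icc a b | u ≤ F t}

section Quantile

variable {F : ℝ → ℝ} {a b u x : ℝ}

lemma quantile_mem_Icc (hab : a ≤ b) (hu : u ≤ F b) : quantile F a b u ∈ Set.Icc a b :=
  ⟨le_csInf ⟨b, ⟨hab, le_rfl⟩, hu⟩ fun _ ht => ht.1.1,
    csInf_le ⟨a, fun _ ht => ht.1.1⟩ (⟨⟨hab, le_rfl⟩, hu⟩ : b ∈ {t ∈ Set.Icc a b | u ≤ F t})⟩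

lemma le_of_quantile_lt (hF : MonotoneOn F (Set.Icc a b)) (hx : x ∈ Set.Icc a b)
    (hu : u ≤ F b) (h : quantile F a b u < x) : u ≤ F x := by
  obtain ⟨t, ⟨ht, hut⟩, htx⟩ := exists_lt_of_csInf_lt
    (⟨b, ⟨hx.1.trans hx.2, le_rfl⟩, hu⟩ : {t ∈ Set.Icc a b | u ≤ F t}.Nonempty) h
  exact hut.trans (hF ht hx htx.le)

lemma quantile_lt_of_lt (hx : x ∈ Set.Icc a b) (hF : ContinuousWithinAt F (Set.Ico a x) x)
    (hu : F a ≤ u) (h : u < F x) : quantile F a b u < x := by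
  have hax : a < x := hx.1.lt_of_ne (by rintro rfl; exact h.not_ge hu)
  have := right_nhdsWithin_Ico_neBot hax
  obtain ⟨t, hut, ht⟩ := ((hF.eventually (lt_mem_nhds h)).and self_mem_nhdsWithin).exists
  exact (csInf_le ⟨a, fun _ ht => ht.1.1⟩
    (⟨⟨ht.1, ht.2.le.trans hx.2⟩, hut.le⟩ : t ∈ {t ∈ Set.Icc a b | u ≤ F t})).trans_lt ht.2

end Quantile

theorem IsUniformlyDistributed.tendsto_card_quantile_lt_div {u : ℕ → ℝ}
    (hu : IsUniformlyDistributed u) (hinj : Function.Injective u) {F : ℝ → ℝ} {a b x : ℝ}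
    (hF : MonotoneOn F (Set.Icc a b)) (hFa : 0 ≤ F a) (hFb : F b ≤ 1) (hx : x ∈ Set.Icc a b)
    (hFx : ContinuousWithinAt F (Set.Ico a x) x) :
    Tendsto (fun N : ℕ =>
        (#{k ∈ range N | u k ∈ Set.Ico (F a) (F b) ∧ quantile F a b (u k) < x} : ℝ) / N)
      atTop (𝓝 (F x - F a)) := by
  have hFax : F a ≤ F x := hF ⟨le_rfl, hx.1.trans hx.2⟩ hx hx.1
  have hFxb : F x ≤ F b := hF hx ⟨hx.1.trans hx.2, le_rfl⟩ hx.2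
  refine tendsto_card_div_of_Ico_subset_of_subset_Icc hinj hFax (hu _ ⟨hFa, by linarith⟩)
    (hu _ ⟨by linarith, by linarith⟩) (fun k ⟨h₁, h₂⟩ => ?_) (fun k ⟨⟨h₁, h₂⟩, h₃⟩ => ?_)
  · exact ⟨⟨h₁, h₂.trans_le hFxb⟩, quantile_lt_of_lt hx hFx h₁ h₂⟩
  · exact ⟨h₁, le_of_quantile_lt hF hx h₂.le h₃⟩

lemma indicator_Ico_one_of_le {a x y : ℝ} (h : a ≤ y) :
    (Set.Ico a x).indicator (fun _ => (1 : ℝ)) y = if y < x then 1 else 0 := by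
  simp [Set.indicator_apply, h]

lemma half_sum_eq_card_div {f : ℕ → ℝ} {P : ℕ → Prop} [DecidablePred P]
    (hf : ∀ k, f k = if P k then 2 else 0) (N : ℕ) :
    (2 * N : ℝ)⁻¹ * ∑ k ∈ range N, f k = #{k ∈ range N | P k} / N := by
  rw [sum_congr rfl fun k _ => hf k, ← sum_filter, sum_const, nsmul_eq_mul]
  field_simp

theorem exists_signed_quantile_sequence {p q : ℝ → ℝ} {a b : ℝ} (hab : a ≤ b)
    (hp : MonotoneOn p (Set.Icc a b)) (hq : MonotoneOn q (Set.Icc a b)) (hpa : p a = 0)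
    (hqa : q a = 0) (hpq : p b + q b = 1) :
    ∃ xs ε : ℕ → ℝ, (∀ k, xs k ∈ Set.Icc a b) ∧ (∀ k, ε k = 1 ∨ ε k = -1) ∧
      ∀ x ∈ Set.Icc a b, ContinuousWithinAt p (Set.Ico a x) x →
        ContinuousWithinAt q (Set.Ico a x) x →
        Tendsto (fun N : ℕ => (2 * N : ℝ)⁻¹ *
            ∑ k ∈ range N, (1 + ε k) * Set.indicator (Set.Ico a x) (fun _ => (1 : ℝ)) (xs k))
          atTop (𝓝 (p x)) ∧
        Tendsto (fun N : ℕ => (2 * N : ℝ)⁻¹ *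
            ∑ k ∈ range N, (1 - ε k) * Set.indicator (Set.Ico a x) (fun _ => (1 : ℝ)) (xs k))
          atTop (𝓝 (q x)) := by
  have hF : MonotoneOn (fun t => p b + q t) (Set.Icc a b) := monotoneOn_const.add hq
  have hpb : 0 ≤ p b := hpa ▸ hp ⟨le_rfl, hab⟩ ⟨hab, le_rfl⟩ hab
  have hqb : 0 ≤ q b := hqa ▸ hq ⟨le_rfl, hab⟩ ⟨hab, le_rfl⟩ hab
  have hF_mem (k : ℕ) : vanDerCorput k ≤ p b + q b := hpq ▸ (vanDerCorput_lt_one k).le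
  refine ⟨fun k => if vanDerCorput k < p b then quantile p a b (vanDerCorput k)
      else quantile (p b + q ·) a b (vanDerCorput k),
    fun k => if vanDerCorput k < p b then 1 else -1, fun k => ?_, fun k => ?_,
    fun x hx hpx hqx => ?_⟩
  · dsimp only
    split_ifs with h
    exacts [quantile_mem_Icc hab h.le, quantile_mem_Icc hab (hF_mem k)]
  · dsimp only
    split_ifs <;> simp
  have hP := isUniformlyDistributed_vanDerCorput.tendsto_card_quantile_lt_div
    vanDerCorput_injective hp hpa.ge (by linarith) hx hpx
  have hQ := isUniformlyDistributed_vanDerCorput.tendsto_card_quantile_lt_div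
    vanDerCorput_injective hF (by simp [hqa, hpb]) hpq.le hx (continuousWithinAt_const.add hqx)
  simp only [hpa, sub_zero, Set.mem_Ico, vanDerCorput_nonneg, true_and] at hP
  simp only [hqa, add_zero, hpq, Set.mem_Ico, vanDerCorput_lt_one, and_true,
    add_sub_cancel_left] at hQ
  constructor
  · refine hP.congr fun N => (half_sum_eq_card_div (fun k => ?_) N).symm
    by_cases h : vanDerCorput k < p b
    · simp [h, indicator_Ico_one_of_le (quantile_mem_Icc hab h.le).1, one_add_one_eq_two]
    · simp [h]
  · refine hQ.congr fun N => (half_sum_eq_card_div (fun k => ?_) N).symm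
    by_cases h : vanDerCorput k < p b
    · simp [h]
    · simp [h, not_lt.1 h, one_add_one_eq_two,
        indicator_Ico_one_of_le (quantile_mem_Icc (F := (p b + q ·)) hab (hF_mem k)).1]

theorem variationOnFromTo.continuousWithinAt_inter_Iio {α E : Type*} [LinearOrder α]
    [TopologicalSpace α] [OrderTopology α] [PseudoMetricSpace E] {f : α → E} {s : Set α}
    (hf : LocallyBoundedVariationOn f s) {a x : α} (ha : a ∈ s) (hx : x ∈ s)
    (hfx : ContinuousWithinAt f (s ∩ Set.Iio x) x) :
    ContinuousWithinAt (variationOnFromTo f s a) (s ∩ Set.Iio x) x := by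
  have h := variationOnFromTo.tendsto_left ha hx hf hfx
  rwa [dist_self, sub_zero] at h

lemma tendsto_average_of_tendsto_half_sums {w ε : ℕ → ℝ} {P Q : ℝ}
    (hplus : Tendsto (fun N : ℕ => (2 * N : ℝ)⁻¹ * ∑ k ∈ range N, (1 + ε k) * w k) atTop (𝓝 P))
    (hminus : Tendsto (fun N : ℕ => (2 * N : ℝ)⁻¹ * ∑ k ∈ range N, (1 - ε k) * w k) atTop
      (𝓝 Q)) :
    Tendsto (fun N : ℕ => (N : ℝ)⁻¹ * ∑ k ∈ range N, w k) atTop (𝓝 (P + Q)) ∧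
      Tendsto (fun N : ℕ => (N : ℝ)⁻¹ * ∑ k ∈ range N, ε k * w k) atTop (𝓝 (P - Q)) := by
  constructor
  · refine (hplus.add hminus).congr fun N => ?_
    have h (k : ℕ) : (1 + ε k) * w k + (1 - ε k) * w k = 2 * w k := by ring
    simp only [← mul_add, ← sum_add_distrib, h, ← mul_sum]
    ring
  · refine (hplus.sub hminus).congr fun N => ?_
    have h (k : ℕ) : (1 + ε k) * w k - (1 - ε k) * w k = 2 * (ε k * w k) := by ring
    simp only [← mul_sub, ← sum_sub_distrib, h, ← mul_sum]
    ring

theorem stmt17_general (a b : ℝ) (hab : a < b) (φ : ℝ → ℝ)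
    (hBV : BoundedVariationOn φ (Set.Icc a b))
    (hφa : φ a = 0) (hV : variationOnFromTo φ (Set.Icc a b) a b = 1) :
    ∃ (xs : ℕ → ℝ) (ε : ℕ → ℝ), (∀ k, xs k ∈ Set.Icc a b) ∧
      (∀ k, ε k = 1 ∨ ε k = -1) ∧
      ∀ x ∈ Set.Icc a b, ContinuousWithinAt φ (Set.Icc a b) x →
        (Tendsto (fun N : ℕ => (N : ℝ)⁻¹ *
            ∑ k ∈ Finset.range N, Set.indicator (Set.Ico a x) (fun _ => (1 : ℝ)) (xs k))
          atTop (nhds (variationOnFromTo φ (Set.Icc a b) a x))) ∧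
        (Tendsto (fun N : ℕ => (N : ℝ)⁻¹ *
            ∑ k ∈ Finset.range N, ε k * Set.indicator (Set.Ico a x) (fun _ => (1 : ℝ)) (xs k))
          atTop (nhds (φ x))) ∧
        (Tendsto (fun N : ℕ => (2 * N : ℝ)⁻¹ *
            ∑ k ∈ Finset.range N, (1 + ε k) * Set.indicator (Set.Ico a x) (fun _ => (1 : ℝ)) (xs k))
          atTop (nhds ((variationOnFromTo φ (Set.Icc a b) a x + φ x) / 2))) ∧
        (Tendsto (fun N : ℕ => (2 * N : ℝ)⁻¹ *
            ∑ k ∈ Finset.range N, (1 - ε k) * Set.indicator (Set.Ico a x) (fun _ => (1 : ℝ)) (xs k))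
          atTop (nhds ((variationOnFromTo φ (Set.Icc a b) a x - φ x) / 2))) := by
  have hφ := hBV.locallyBoundedVariationOn
  have ha : a ∈ Set.Icc a b := ⟨le_rfl, hab.le⟩
  set v := variationOnFromTo φ (Set.Icc a b) a
  have hva : v a = 0 := variationOnFromTo.self _ _ _
  obtain ⟨xs, ε, hxs, hε, hlim⟩ := exists_signed_quantile_sequence (p := fun t => (v t + φ t) / 2)
    (q := fun t => (v t - φ t) / 2) hab.le
    ((monotone_id.div_const zero_le_two).comp_monotoneOn
      (variationOnFromTo.add_self_monotoneOn hφ ha))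
    ((monotone_id.div_const zero_le_two).comp_monotoneOn
      (variationOnFromTo.sub_self_monotoneOn hφ ha))
    (by simp [hva, hφa]) (by simp [hva, hφa]) (by rw [← add_div]; simp [v, hV])
  refine ⟨xs, ε, hxs, hε, fun x hx hφx => ?_⟩
  have hleft : Set.Ico a x ⊆ Set.Icc a b ∩ Set.Iio x :=
    fun t ht => ⟨⟨ht.1, ht.2.le.trans hx.2⟩, ht.2⟩
  have hvx := (variationOnFromTo.continuousWithinAt_inter_Iio hφ ha hx
    (hφx.mono Set.inter_subset_left)).mono hleft
  have hφx' := hφx.mono (hleft.trans Set.inter_subset_left)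
  obtain ⟨hplus, hminus⟩ := hlim x hx ((hvx.add hφx').div_const 2) ((hvx.sub hφx').div_const 2)
  obtain ⟨hsum, hsigned⟩ := tendsto_average_of_tendsto_half_sums hplus hminus
  exact ⟨by convert hsum using 2; ring, by convert hsigned using 2; ring, hplus, hminus⟩

/-- Let `φ : [a,b] → ℝ` be right continuous and of bounded
variation, with `φ a = 0` and total variation `V_a^b φ = 1`.  Let
`v x = V_a^x φ` and `p = (v + φ)/2`, `n = (v - φ)/2`.  Then there are a
sequence `(x_k) ⊆ [a,b]` and signs `(ε_k) ⊆ {±1}` such that at every point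
`x ∈ [a,b]` of continuity of `φ` the limit relations (a)–(d) hold. -/
theorem stmt17 (a b : ℝ) (hab : a < b) (φ : ℝ → ℝ)
    (hBV : BoundedVariationOn φ (Set.Icc a b))
    (hrc : ∀ x ∈ Set.Icc a b, ContinuousWithinAt φ (Set.Icc x b) x)
    (hφa : φ a = 0) (hV : variationOnFromTo φ (Set.Icc a b) a b = 1) :
    ∃ (xs : ℕ → ℝ) (ε : ℕ → ℝ), (∀ k, xs k ∈ Set.Icc a b) ∧
      (∀ k, ε k = 1 ∨ ε k = -1) ∧
      ∀ x ∈ Set.Icc a b, ContinuousWithinAt φ (Set.Icc a b) x →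
        (Tendsto (fun N : ℕ => (N : ℝ)⁻¹ *
            ∑ k ∈ Finset.range N, Set.indicator (Set.Ico a x) (fun _ => (1 : ℝ)) (xs k))
          atTop (nhds (variationOnFromTo φ (Set.Icc a b) a x))) ∧
        (Tendsto (fun N : ℕ => (N : ℝ)⁻¹ *
            ∑ k ∈ Finset.range N, ε k * Set.indicator (Set.Ico a x) (fun _ => (1 : ℝ)) (xs k))
          atTop (nhds (φ x))) ∧
        (Tendsto (fun N : ℕ => (2 * N : ℝ)⁻¹ *
            ∑ k ∈ Finset.range N, (1 + ε k) * Set.indicator (Set.Ico a x) (fun _ => (1 : ℝ)) (xs k))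
          atTop (nhds ((variationOnFromTo φ (Set.Icc a b) a x + φ x) / 2))) ∧
        (Tendsto (fun N : ℕ => (2 * N : ℝ)⁻¹ *
            ∑ k ∈ Finset.range N, (1 - ε k) * Set.indicator (Set.Ico a x) (fun _ => (1 : ℝ)) (xs k))
          atTop (nhds ((variationOnFromTo φ (Set.Icc a b) a x - φ x) / 2))) :=
  stmt17_general a b hab φ hBV hφa hV
end

section
/- Let φ : [0,1] → ℝ be a continuous function of bounded variation with φ(0) = 0 and total variation V_0^1 φ = 1, and suppose ω = (x_k)_{k≥1} ⊆ [0,1] and (ε_k)_{k≥1} ⊆ {−1,+1} are sequences such that for every x ∈ [0,1], (1/N)·Σ_{k=1}^N χ_{[0,x)}(x_k) → v(x) and (1/N)·Σ_{k=1}^N ε_k·χ_{[0,x)}(x_k) → φ(x) as N → ∞, where v(x) = V_0^x φ. Then the discrepancy D_N(ω;φ) = sup_{0 ≤ a < b ≤ 1} |(1/N)·Σ_{k=1}^N ε_k·χ_{[a,b)}(x_k) − (φ(b) − φ(a))| satisfies D_N(ω;φ) → 0 as N → ∞. -/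
/-!
Since `|ε_k| ≤ 1`, the empirical distribution functions with the nonnegative weights
`(1 ± ε_k) / 2` are monotone in `x`, and they converge pointwise to `(v ± φ) / 2`, which is
continuous because the variation function of a continuous function of bounded variation is
continuous. By Pólya's theorem (pointwise convergence of monotone functions to a continuous limit
on a compact interval is uniform) both converge uniformly, hence so does their difference, the
`ε`-weighted distribution function, to `φ`. The discrepancy is at most twice this uniform error,
as `[a, b) = [0, b) \ [0, a)`.
-/

open Filter Finset Set Topology

theorem LocallyBoundedVariationOn.continuousOn_variationOnFromTo {α E : Type*} [LinearOrder α]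
    [TopologicalSpace α] [OrderTopology α] [PseudoMetricSpace E] {f : α → E} {s : Set α}
    (hf : LocallyBoundedVariationOn f s) (hcont : ContinuousOn f s) {a : α} (ha : a ∈ s) :
    ContinuousOn (variationOnFromTo f s a) s := by
  intro b hb
  have hleft : ContinuousWithinAt (variationOnFromTo f s a) (s ∩ Iio b) b := by
    simpa [ContinuousWithinAt] using
      variationOnFromTo.tendsto_left ha hb hf ((hcont b hb).mono inter_subset_left)
  have hright : ContinuousWithinAt (variationOnFromTo f s a) (s ∩ Ioi b) b := by
    simpa [ContinuousWithinAt] using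
      variationOnFromTo.tendsto_right ha hb hf ((hcont b hb).mono inter_subset_left)
  refine (hleft.union hright).insert.mono fun x hx => ?_
  rcases lt_trichotomy x b with h | rfl | h
  · exact .inr (.inl ⟨hx, h⟩)
  · exact .inl rfl
  · exact .inr (.inr ⟨hx, h⟩)

theorem tendstoUniformlyOn_Icc_of_monotoneOn {ι : Type*} {l : Filter ι} {F : ι → ℝ → ℝ}
    {f : ℝ → ℝ} {a b : ℝ} (hF : ∀ i, MonotoneOn (F i) (Icc a b)) (hf : ContinuousOn f (Icc a b))
    (hlim : ∀ x ∈ Icc a b, Tendsto (F · x) l (𝓝 (f x))) :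
    TendstoUniformlyOn F f l (Icc a b) := by
  rw [← tendstoLocallyUniformlyOn_iff_tendstoUniformlyOn_of_compact isCompact_Icc,
    Metric.tendstoLocallyUniformlyOn_iff]
  intro ε hε x hx
  obtain ⟨δ, hδ, hfδ⟩ := Metric.continuousWithinAt_iff.1 (hf x hx) (ε / 4) (by positivity)
  set t := Icc a b ∩ Icc (x - δ / 2) (x + δ / 2)
  have hclose : ∀ y ∈ t, |f y - f x| < ε / 4 := fun y ⟨hy, hyx⟩ =>
    hfδ hy (abs_sub_lt_iff.2 ⟨by linarith [hyx.2], by linarith [hyx.1]⟩)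
  -- every `y ∈ t` lies in `[p, q] ⊆ t`, where `F i` is squeezed between `F i p` and `F i q`
  set p := max a (x - δ / 2)
  set q := min b (x + δ / 2)
  have hp : p ∈ t := ⟨⟨le_max_left _ _, max_le (hx.1.trans hx.2) (by linarith [hx.2])⟩,
    le_max_right _ _, max_le (by linarith [hx.1]) (by linarith)⟩
  have hq : q ∈ t := ⟨⟨le_min (hx.1.trans hx.2) (by linarith [hx.1]), min_le_left _ _⟩,
    le_min (by linarith [hx.2]) (by linarith), min_le_right _ _⟩
  have hpq : ∀ y ∈ t, p ≤ y ∧ y ≤ q := fun y ⟨hy, hyx⟩ =>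
    ⟨max_le hy.1 hyx.1, le_min hy.2 hyx.2⟩
  refine ⟨t, inter_mem_nhdsWithin _ (Icc_mem_nhds (by linarith) (by linarith)), ?_⟩
  filter_upwards [Metric.tendsto_nhds.1 (hlim p hp.1) (ε / 4) (by positivity),
    Metric.tendsto_nhds.1 (hlim q hq.1) (ε / 4) (by positivity)] with i hFp hFq y hy
  have hlow : F i p ≤ F i y := hF i hp.1 hy.1 (hpq y hy).1
  have hupp : F i y ≤ F i q := hF i hy.1 hq.1 (hpq y hy).2
  rw [Real.dist_eq] at hFp hFq ⊢
  have hfy := hclose y hy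
  have hfp := hclose p hp
  have hfq := hclose q hq
  rw [abs_lt] at hFp hFq hfy hfp hfq ⊢
  constructor <;> linarith

noncomputable def empiricalMeasureIco (w xs : ℕ → ℝ) (N : ℕ) (a b : ℝ) : ℝ :=
  (N : ℝ)⁻¹ * ∑ k ∈ range N, w k * Set.indicator (Ico a b) (fun _ => (1 : ℝ)) (xs k)

namespace empiricalMeasureIco

variable {w xs : ℕ → ℝ} {N : ℕ} {a b c : ℝ}

theorem monotone (hw : ∀ k, 0 ≤ w k) (N : ℕ) (a : ℝ) :
    Monotone (empiricalMeasureIco w xs N a) := fun x y hxy => by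
  unfold empiricalMeasureIco
  gcongr with k
  exact hw k

theorem add_adjacent (hab : a ≤ b) (hbc : b ≤ c) :
    empiricalMeasureIco w xs N a b + empiricalMeasureIco w xs N b c =
      empiricalMeasureIco w xs N a c := by
  simp only [empiricalMeasureIco, ← Ico_union_Ico_eq_Ico hab hbc,
    indicator_union_of_disjoint Ico_disjoint_Ico_same, mul_add, sum_add_distrib]

theorem affine_weights (r s : ℝ) :
    empiricalMeasureIco (fun k => r + s * w k) xs N a b =
      r * empiricalMeasureIco (fun _ => 1) xs N a b + s * empiricalMeasureIco w xs N a b := by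
  simp only [empiricalMeasureIco, add_mul, sum_add_distrib, mul_assoc, ← mul_sum]
  ring

end empiricalMeasureIco

theorem tendstoUniformlyOn_empiricalMeasureIco {w xs : ℕ → ℝ} {v φ : ℝ → ℝ} {a b : ℝ}
    (hw : ∀ k, |w k| ≤ 1) (hvc : ContinuousOn v (Icc a b)) (hφc : ContinuousOn φ (Icc a b))
    (hv : ∀ x ∈ Icc a b,
      Tendsto (fun N => empiricalMeasureIco (fun _ => 1) xs N a x) atTop (𝓝 (v x)))
    (hφ : ∀ x ∈ Icc a b, Tendsto (fun N => empiricalMeasureIco w xs N a x) atTop (𝓝 (φ x))) :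
    TendstoUniformlyOn (fun N => empiricalMeasureIco w xs N a) φ atTop (Icc a b) := by
  -- `w = (1 + w) / 2 - (1 - w) / 2` splits the weights into two nonnegative ones
  have key : ∀ d : ℝ, |d| ≤ 1 → TendstoUniformlyOn
      (fun N => empiricalMeasureIco (fun k => 1 / 2 + d / 2 * w k) xs N a)
      (fun x => 1 / 2 * v x + d / 2 * φ x) atTop (Icc a b) := by
    intro d hd
    refine tendstoUniformlyOn_Icc_of_monotoneOn
      (fun N => (empiricalMeasureIco.monotone (fun k => ?_) N a).monotoneOn _)
      ((continuousOn_const.mul hvc).add (continuousOn_const.mul hφc)) fun x hx => ?_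
    · have := abs_mul d (w k) ▸ mul_le_one₀ hd (abs_nonneg _) (hw k)
      have := neg_abs_le (d * w k)
      linarith
    · simp only [empiricalMeasureIco.affine_weights]
      exact ((hv x hx).const_mul _).add ((hφ x hx).const_mul _)
  refine ((key 1 (by norm_num)).sub (key (-1) (by norm_num))).congr (.of_forall fun N x _ => ?_)
    |>.congr_right fun x _ => ?_
  · simp only [Pi.sub_apply, empiricalMeasureIco.affine_weights]
    ring
  · simp only [Pi.sub_apply]
    ring

theorem abs_empiricalMeasureIco_sub_le {w xs : ℕ → ℝ} {N : ℕ} {φ : ℝ → ℝ} {a b c : ℝ}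
    (hab : a ≤ b) (hbc : b ≤ c) :
    |empiricalMeasureIco w xs N b c - (φ c - φ b)| ≤
      |empiricalMeasureIco w xs N a c - φ c| + |empiricalMeasureIco w xs N a b - φ b| := by
  have h := empiricalMeasureIco.add_adjacent (w := w) (xs := xs) (N := N) hab hbc
  calc _ = |(empiricalMeasureIco w xs N a c - φ c) - (empiricalMeasureIco w xs N a b - φ b)| := by
        rw [← h]; ring_nf
    _ ≤ _ := abs_sub _ _

theorem stmt18_general (φ : ℝ → ℝ)
    (hcont : ContinuousOn φ (Set.Icc 0 1))
    (hBV : BoundedVariationOn φ (Set.Icc 0 1))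
    (xs : ℕ → ℝ)
    (ε : ℕ → ℝ) (hε : ∀ k, ε k = 1 ∨ ε k = -1)
    (hv : ∀ x ∈ Set.Icc (0 : ℝ) 1,
      Tendsto (fun N : ℕ => (N : ℝ)⁻¹ *
          ∑ k ∈ Finset.range N, Set.indicator (Set.Ico 0 x) (fun _ => (1 : ℝ)) (xs k))
        atTop (nhds (variationOnFromTo φ (Set.Icc 0 1) 0 x)))
    (hφ : ∀ x ∈ Set.Icc (0 : ℝ) 1,
      Tendsto (fun N : ℕ => (N : ℝ)⁻¹ *
          ∑ k ∈ Finset.range N, ε k * Set.indicator (Set.Ico 0 x) (fun _ => (1 : ℝ)) (xs k))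
        atTop (nhds (φ x))) :
    Tendsto (fun N : ℕ =>
        ⨆ q : {q : ℝ × ℝ // 0 ≤ q.1 ∧ q.1 < q.2 ∧ q.2 ≤ 1},
          |(N : ℝ)⁻¹ *
              (∑ k ∈ Finset.range N,
                ε k * Set.indicator (Set.Ico (q : ℝ × ℝ).1 (q : ℝ × ℝ).2) (fun _ => (1 : ℝ)) (xs k))
            - (φ (q : ℝ × ℝ).2 - φ (q : ℝ × ℝ).1)|)
      atTop (nhds 0) := by
  have hvc : ContinuousOn (variationOnFromTo φ (Icc 0 1) 0) (Icc 0 1) :=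
    hBV.locallyBoundedVariationOn.continuousOn_variationOnFromTo hcont (left_mem_Icc.2 zero_le_one)
  have hunif := tendstoUniformlyOn_empiricalMeasureIco
    (fun k => by rcases hε k with h | h <;> simp [h]) hvc hcont
    (fun x hx => by simpa [empiricalMeasureIco] using hv x hx) hφ
  rw [Metric.tendsto_nhds]
  intro η hη
  filter_upwards [Metric.tendstoUniformlyOn_iff.1 hunif (η / 3) (by positivity)] with N hN
  have hsup : (⨆ q : {q : ℝ × ℝ // 0 ≤ q.1 ∧ q.1 < q.2 ∧ q.2 ≤ 1},
      |empiricalMeasureIco ε xs N q.1.1 q.1.2 - (φ q.1.2 - φ q.1.1)|) ≤ 2 * (η / 3) := by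
    refine Real.iSup_le (fun ⟨(a, b), ha, hab, hb⟩ => ?_) (by positivity)
    have hNa := hN a ⟨ha, hab.le.trans hb⟩
    have hNb := hN b ⟨ha.trans hab.le, hb⟩
    rw [dist_comm, Real.dist_eq] at hNa hNb
    linarith [abs_empiricalMeasureIco_sub_le (w := ε) (xs := xs) (N := N) (φ := φ) ha hab.le]
  rw [Real.dist_eq, sub_zero, abs_of_nonneg (Real.iSup_nonneg fun _ => abs_nonneg _)]
  exact hsup.trans_lt (by linarith)

/-- Let `φ : [0,1] → ℝ` be a continuous function of bounded
variation with `φ 0 = 0` and `V_0^1 φ = 1`, and let `ω = (x_k) ⊆ [0,1]`,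
`(ε_k) ⊆ {±1}` be sequences such that for every `x ∈ [0,1]` the means
`(1/N)·∑_{k<N} χ_{[0,x)}(x_k)` converge to `v x = V_0^x φ` and
`(1/N)·∑_{k<N} ε_k χ_{[0,x)}(x_k)` converge to `φ x`.  Then the discrepancy
`D_N(ω;φ) = sup_{0 ≤ a < b ≤ 1} |(1/N)·∑_{k<N} ε_k χ_{[a,b)}(x_k) - (φ b - φ a)|`
tends to `0` as `N → ∞`. -/
theorem stmt18 (φ : ℝ → ℝ)
    (hcont : ContinuousOn φ (Set.Icc 0 1))
    (hBV : BoundedVariationOn φ (Set.Icc 0 1))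
    (hφ0 : φ 0 = 0) (hV : variationOnFromTo φ (Set.Icc 0 1) 0 1 = 1)
    (xs : ℕ → ℝ) (hxs : ∀ k, xs k ∈ Set.Icc (0 : ℝ) 1)
    (ε : ℕ → ℝ) (hε : ∀ k, ε k = 1 ∨ ε k = -1)
    (hv : ∀ x ∈ Set.Icc (0 : ℝ) 1,
      Tendsto (fun N : ℕ => (N : ℝ)⁻¹ *
          ∑ k ∈ Finset.range N, Set.indicator (Set.Ico 0 x) (fun _ => (1 : ℝ)) (xs k))
        atTop (nhds (variationOnFromTo φ (Set.Icc 0 1) 0 x)))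
    (hφ : ∀ x ∈ Set.Icc (0 : ℝ) 1,
      Tendsto (fun N : ℕ => (N : ℝ)⁻¹ *
          ∑ k ∈ Finset.range N, ε k * Set.indicator (Set.Ico 0 x) (fun _ => (1 : ℝ)) (xs k))
        atTop (nhds (φ x))) :
    Tendsto (fun N : ℕ =>
        ⨆ q : {q : ℝ × ℝ // 0 ≤ q.1 ∧ q.1 < q.2 ∧ q.2 ≤ 1},
          |(N : ℝ)⁻¹ *
              (∑ k ∈ Finset.range N,
                ε k * Set.indicator (Set.Ico (q : ℝ × ℝ).1 (q : ℝ × ℝ).2) (fun _ => (1 : ℝ)) (xs k))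
            - (φ (q : ℝ × ℝ).2 - φ (q : ℝ × ℝ).1)|)
      atTop (nhds 0) :=
  stmt18_general φ hcont hBV xs ε hε hv hφ
end
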